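/- Every generalized Kracht formula α(x_0) (read as a first-order formula over the frame language via the # translation of its atoms) is the local first-order correspondent of some generalized Sahlqvist formula: there exists a generalized Sahlqvist formula φ such that for every Kripke frame F and every point w, F, w ⊨ φ under every valuation if and only if F ⊨ α[w]. -/

import Mathlib

set_option autoImplicit true

universe u v w

/-- Modal formulas over modality indices `Λ` and propositional variables `V`. -/
inductive MF (Λ : Type u) (V : Type v) : Type (max u v)
  | var : V → MF Λ V
  | top : MF Λ V
  | bot : MF Λ V
  | and : MF Λ V → MF Λ V → MF Λ V
  | or  : MF Λ V → MF Λ V → MF Λ V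
  | neg : MF Λ V → MF Λ V
  | imp : MF Λ V → MF Λ V → MF Λ V
  | dia : Λ → MF Λ V → MF Λ V
  | box : Λ → MF Λ V → MF Λ V

namespace MF
variable {Λ : Type u} {V : Type v}

/-- The set of propositional variables occurring in a modal formula. -/
def vars : MF Λ V → Set V
  | var p => {p}
  | top => ∅
  | bot => ∅
  | and a b => vars a ∪ vars b
  | or a b => vars a ∪ vars b
  | neg a => vars a
  | imp a b => vars a ∪ vars b
  | dia _ a => vars a
  | box _ a => vars a

end MF

/-- Positive modal formulas: built without `¬` and `→`. -/
inductive Positive {Λ : Type u} {V : Type v} : MF Λ V → Prop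
  | var (p : V) : Positive (.var p)
  | top : Positive .top
  | bot : Positive .bot
  | and {a b} : Positive a → Positive b → Positive (.and a b)
  | or {a b} : Positive a → Positive b → Positive (.or a b)
  | dia (l) {a} : Positive a → Positive (.dia l a)
  | box (l) {a} : Positive a → Positive (.box l a)

/-- A Kripke frame with accessibility relations indexed by `Λ`. -/
structure Frame (Λ : Type u) where
  W : Type w
  R : Λ → W → W → Prop

/-- Kripke satisfaction `F, x, θ ⊨ φ`. -/
def sat {Λ : Type u} {V : Type v} (F : Frame Λ) (θ : V → Set F.W) : F.W → MF Λ V → Prop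
  | x, .var p => x ∈ θ p
  | _, .top => True
  | _, .bot => False
  | x, .and a b => sat F θ x a ∧ sat F θ x b
  | x, .or a b => sat F θ x a ∨ sat F θ x b
  | x, .neg a => ¬ sat F θ x a
  | x, .imp a b => sat F θ x a → sat F θ x b
  | x, .dia l a => ∃ y, F.R l x y ∧ sat F θ y a
  | x, .box l a => ∀ y, F.R l x y → sat F θ y a

/-- `BoxF φ p S`: `φ` is a box-formula with head `p`, in which the set of variables
occurring not as the head is `S`. -/
inductive BoxF {Λ : Type u} {V : Type v} : MF Λ V → V → Set V → Prop
  | var (p : V) : BoxF (.var p) p ∅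
  | imp {POS ψ p S} : Positive POS → BoxF ψ p S → BoxF (.imp POS ψ) p (MF.vars POS ∪ S)
  | box (l) {ψ p S} : BoxF ψ p S → BoxF (.box l ψ) p S

/-- `RegBF r φ p`: relative to the rank assignment `r`, `φ` is a regular box-formula
with head `p` (of rank `r p`): all variables of the positive antecedents have rank `< r p`. -/
inductive RegBF {Λ : Type u} {V : Type v} (r : V → ℕ) : MF Λ V → V → Prop
  | var (p : V) : RegBF r (.var p) p
  | imp {POS ψ p} : Positive POS → (∀ q ∈ MF.vars POS, r q < r p) →
      RegBF r ψ p → RegBF r (.imp POS ψ) p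
  | box (l) {ψ p} : RegBF r ψ p → RegBF r (.box l ψ) p

/-- The edge relation of the dependency graph of a set `A` of box-formulas:
`p → q` iff `p` occurs (not as the head) in some member of `A` with head `q`. -/
def depEdge {Λ : Type u} {V : Type v} (A : Set (MF Λ V)) (p q : V) : Prop :=
  ∃ φ ∈ A, ∃ S, BoxF φ q S ∧ p ∈ S

/-- A set of box-formulas is regular if its dependency graph has no oriented cycle. -/
def RegularSet {Λ : Type u} {V : Type v} (A : Set (MF Λ V)) : Prop :=
  ∀ p : V, ¬ Relation.TransGen (depEdge A) p p

/-- `R_λ^{-1}(A) = {u : ∃ v, u R_λ v ∧ v ∈ A}`. -/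
def Rinv {Λ : Type u} (F : Frame Λ) (l : Λ) (A : Set F.W) : Set F.W :=
  {u | ∃ v, F.R l u v ∧ v ∈ A}

/-- `R_λ^□(A) = {u : ∀ v, u R_λ v → v ∈ A}`. -/
def RboxOp {Λ : Type u} (F : Frame Λ) (l : Λ) (A : Set F.W) : Set F.W :=
  {u | ∀ v, F.R l u v → v ∈ A}

/-- `R_λ(A) = {u : ∃ v, v R_λ u ∧ v ∈ A}`. -/
def Rfwd {Λ : Type u} (F : Frame Λ) (l : Λ) (A : Set F.W) : Set F.W :=
  {u | ∃ v, F.R l v u ∧ v ∈ A}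

/-- The interpretation of the expression `KP^{POS}` in a frame `F`, the set variables
`P^l_i` being interpreted by `P`.  (Junk value `∅` on non-positive constructors.) -/
def KPsem {Λ : Type u} (F : Frame Λ) (P : ℕ × ℕ → Set F.W) : MF Λ (ℕ × ℕ) → Set F.W
  | .var q => P q
  | .top => Set.univ
  | .bot => ∅
  | .and a b => KPsem F P a ∩ KPsem F P b
  | .or a b => KPsem F P a ∪ KPsem F P b
  | .dia l a => Rinv F l (KPsem F P a)
  | .box l a => RboxOp F l (KPsem F P a)
  | .neg _ => ∅
  | .imp _ _ => ∅

/-- The interpretation of the expression `KV^φ` in a frame `F`: the set variables `P^l_i`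
are interpreted by `P` and the extra variable `#` by the second argument.
(Junk value `∅` on constructors that do not occur in regular box-formulas.) -/
def KVsem {Λ : Type u} (F : Frame Λ) (P : ℕ × ℕ → Set F.W) : MF Λ (ℕ × ℕ) → Set F.W → Set F.W
  | .var _, X => X
  | .imp POS ψ, X => KVsem F P ψ (X ∩ KPsem F P POS)
  | .box l ψ, X => KVsem F P ψ (Rfwd F l X)
  | _, _ => ∅

/-- The semantic minimal valuation: given points `g j` and sets `f j` of regular
box-formulas to be verified at `g j`, `thetaMinSem F g f k i` is the minimal value of the
variable `p^k_i`; it is defined by recursion on the rank `k` as the union, over all `j` and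
all `φ ∈ f j` with head `p^k_i`, of `KV^φ(g j)` computed with the minimal values of the
variables of lower rank. -/
noncomputable def thetaMinSem {Λ : Type u} (F : Frame Λ) {ι : Type w} (g : ι → F.W)
    (f : ι → Set (MF Λ (ℕ × ℕ))) : ℕ → ℕ → Set F.W :=
  fun k => Nat.strongRecOn (motive := fun _ => ℕ → Set F.W) k fun k ih i =>
    ⋃ (j : ι), ⋃ φ ∈ f j, ⋃ (_ : RegBF Prod.fst φ (k, i)),
      KVsem F (fun q => if h : q.1 < k then ih q.1 h q.2 else ∅) φ {g j}

/-- `L`-expressions: terms of the language `L` with individual variables `x_i` (`i : ℕ`),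
constants `⊤, ⊥`, unary `R_λ^{-1}`, `R_λ^□`, `R_λ` and binary `∩`, `∪`. -/
inductive LExp (Λ : Type u) : Type u
  | var : ℕ → LExp Λ
  | top : LExp Λ
  | bot : LExp Λ
  | inter : LExp Λ → LExp Λ → LExp Λ
  | union : LExp Λ → LExp Λ → LExp Λ
  | rinv : Λ → LExp Λ → LExp Λ
  | rbox : Λ → LExp Λ → LExp Λ
  | rfw : Λ → LExp Λ → LExp Λ

namespace LExp
variable {Λ : Type u}

/-- Denotation of an `L`-expression in a frame `F`, the variable `x_i` denoting the
singleton of the point `g i`. -/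
def den (F : Frame Λ) (g : ℕ → F.W) : LExp Λ → Set F.W
  | var i => {g i}
  | top => Set.univ
  | bot => ∅
  | inter a b => den F g a ∩ den F g b
  | union a b => den F g a ∪ den F g b
  | rinv l a => Rinv F l (den F g a)
  | rbox l a => RboxOp F l (den F g a)
  | rfw l a => Rfwd F l (den F g a)

/-- The set of (indices of) individual variables occurring in an `L`-expression. -/
def evars : LExp Λ → Set ℕ
  | var i => {i}
  | top => ∅
  | bot => ∅
  | inter a b => evars a ∪ evars b
  | union a b => evars a ∪ evars b
  | rinv _ a => evars a
  | rbox _ a => evars a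
  | rfw _ a => evars a

end LExp

/-- The subexpression relation on `L`-expressions. -/
inductive Subexp {Λ : Type u} : LExp Λ → LExp Λ → Prop
  | refl (e : LExp Λ) : Subexp e e
  | interL {e a b} : Subexp e a → Subexp e (.inter a b)
  | interR {e a b} : Subexp e b → Subexp e (.inter a b)
  | unionL {e a b} : Subexp e a → Subexp e (.union a b)
  | unionR {e a b} : Subexp e b → Subexp e (.union a b)
  | rinv (l) {e a} : Subexp e a → Subexp e (.rinv l a)
  | rbox (l) {e a} : Subexp e a → Subexp e (.rbox l a)
  | rfw (l) {e a} : Subexp e a → Subexp e (.rfw l a)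

/-- `SafeFor e`: `e` is "safe for" the ambient expression, i.e. `e` is a variable, or
`R_λ(e')` with `e'` safe for it, or an intersection one of whose components is safe for it. -/
inductive SafeFor {Λ : Type u} : LExp Λ → Prop
  | var (i : ℕ) : SafeFor (.var i)
  | rfw (l) {a} : SafeFor a → SafeFor (.rfw l a)
  | interL {a b} : SafeFor a → SafeFor (.inter a b)
  | interR {a b} : SafeFor b → SafeFor (.inter a b)

/-- An `L`-expression is safe if it is safe for itself and the argument of every
subexpression of the form `R_λ(ψ)` is safe for it. -/
def Safe {Λ : Type u} (e : LExp Λ) : Prop :=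
  SafeFor e ∧ ∀ l a, Subexp (.rfw l a) e → SafeFor a

mutual
  /-- The class `K`: the least class of `L`-expressions containing the variables and closed
  under `S ↦ R_λ(S)` and `S ↦ S ∩ E` for `E` a positive combination of members of `K`. -/
  inductive InK {Λ : Type u} : LExp Λ → Prop
    | var (i : ℕ) : InK (.var i)
    | rfw (l : Λ) {S : LExp Λ} : InK S → InK (.rfw l S)
    | inter {S E : LExp Λ} : InK S → PosOfK E → InK (.inter S E)
  /-- Positive combinations of members of `K`: built from members of `K` using only
  `∩`, `∪`, `R_λ^{-1}`, `R_λ^□`, `⊤`, `⊥`. -/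
  inductive PosOfK {Λ : Type u} : LExp Λ → Prop
    | ofK {e : LExp Λ} : InK e → PosOfK e
    | top : PosOfK .top
    | bot : PosOfK .bot
    | inter {a b} : PosOfK a → PosOfK b → PosOfK (.inter a b)
    | union {a b} : PosOfK a → PosOfK b → PosOfK (.union a b)
    | rinv (l) {a} : PosOfK a → PosOfK (.rinv l a)
    | rbox (l) {a} : PosOfK a → PosOfK (.rbox l a)
end

/-- Quasi-safe `L`-expressions: positive combinations of safe expressions, i.e. built from
safe expressions using only `∩`, `∪`, `R_λ^{-1}`, `R_λ^□`, `⊤`, `⊥`. -/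
inductive QuasiSafe {Λ : Type u} : LExp Λ → Prop
  | safe {e : LExp Λ} : Safe e → QuasiSafe e
  | top : QuasiSafe .top
  | bot : QuasiSafe .bot
  | inter {a b} : QuasiSafe a → QuasiSafe b → QuasiSafe (.inter a b)
  | union {a b} : QuasiSafe a → QuasiSafe b → QuasiSafe (.union a b)
  | rinv (l) {a} : QuasiSafe a → QuasiSafe (.rinv l a)
  | rbox (l) {a} : QuasiSafe a → QuasiSafe (.rbox l a)

/-- `ReplOne i ψ φ φ'`: `φ'` is the result of replacing one occurrence of the variable
`x_i` in `φ` by `ψ`. -/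
inductive ReplOne {Λ : Type u} (i : ℕ) (ψ : LExp Λ) : LExp Λ → LExp Λ → Prop
  | here : ReplOne i ψ (.var i) ψ
  | interL {a a' b} : ReplOne i ψ a a' → ReplOne i ψ (.inter a b) (.inter a' b)
  | interR {a b b'} : ReplOne i ψ b b' → ReplOne i ψ (.inter a b) (.inter a b')
  | unionL {a a' b} : ReplOne i ψ a a' → ReplOne i ψ (.union a b) (.union a' b)
  | unionR {a b b'} : ReplOne i ψ b b' → ReplOne i ψ (.union a b) (.union a b')
  | rinv (l) {a a'} : ReplOne i ψ a a' → ReplOne i ψ (.rinv l a) (.rinv l a')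
  | rbox (l) {a a'} : ReplOne i ψ a a' → ReplOne i ψ (.rbox l a) (.rbox l a')
  | rfw (l) {a a'} : ReplOne i ψ a a' → ReplOne i ψ (.rfw l a) (.rfw l a')

/-- A finite union of `L`-expressions (empty union is `⊥`). -/
def unionList {Λ : Type u} : List (LExp Λ) → LExp Λ
  | [] => .bot
  | e :: es => .union e (unionList es)

/-- `UnionOfSafe e`: `e` is a finite union of safe expressions. -/
inductive UnionOfSafe {Λ : Type u} : LExp Λ → Prop
  | bot : UnionOfSafe .bot
  | safe {e : LExp Λ} : Safe e → UnionOfSafe e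
  | union {a b} : UnionOfSafe a → UnionOfSafe b → UnionOfSafe (.union a b)

/-- Syntactic `KP^{POS}`: the `L`-expression obtained from the positive formula `POS` by
replacing each set variable `P^l_i` by the `L`-expression `KF (l, i)`.
(Junk value on non-positive constructors.) -/
def KPsub {Λ : Type u} (KF : ℕ × ℕ → LExp Λ) : MF Λ (ℕ × ℕ) → LExp Λ
  | .var q => KF q
  | .top => .top
  | .bot => .bot
  | .and a b => .inter (KPsub KF a) (KPsub KF b)
  | .or a b => .union (KPsub KF a) (KPsub KF b)
  | .dia l a => .rinv l (KPsub KF a)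
  | .box l a => .rbox l (KPsub KF a)
  | .neg _ => .bot
  | .imp _ _ => .bot

/-- Syntactic `KVF^φ(t)`: the `L`-expression obtained from `KV^φ` by substituting the
`L`-expression `t` for `#` and `KF (l, i)` for each set variable `P^l_i`.
(Junk value on constructors that do not occur in regular box-formulas.) -/
def KVFsyn {Λ : Type u} (KF : ℕ × ℕ → LExp Λ) : MF Λ (ℕ × ℕ) → LExp Λ → LExp Λ
  | .var _, t => t
  | .imp POS ψ, t => KVFsyn KF ψ (.inter t (KPsub KF POS))
  | .box l ψ, t => KVFsyn KF ψ (.rfw l t)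
  | _, _ => .bot

open scoped Classical in
/-- The syntactic minimal valuation `KF_f^{p^k_i}` for variables `x_0, …, x_{n-1}` and
`f` assigning to each variable a finite set of regular box-formulas: defined by recursion on
the rank `k` as the union, over all `j < n` and all `φ ∈ f j` with head `p^k_i`, of
`KVF_f^φ(x_j)`, which is `KV^φ` with `x_j` substituted for `#` and `KF_f^{p^l_m}`
substituted for each `P^l_m` with `l < k`. -/
noncomputable def KFsyn {Λ : Type u} (n : ℕ) (f : ℕ → Finset (MF Λ (ℕ × ℕ))) :
    ℕ → ℕ → LExp Λ :=
  fun k => Nat.strongRecOn (motive := fun _ => ℕ → LExp Λ) k fun k ih i =>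
    unionList (((List.range n).flatMap fun j =>
      ((f j).toList.filter fun φ => decide (RegBF Prod.fst φ (k, i))).map fun φ =>
        KVFsyn (fun q => if h : q.1 < k then ih q.1 h q.2 else LExp.bot) φ (LExp.var j)))

/-- The expressions substituted for the set variables `P^l_m`, `l < k`, in `KVF`:
the syntactic minimal valuations of the lower ranks. -/
noncomputable def lowKF {Λ : Type u} (n : ℕ) (f : ℕ → Finset (MF Λ (ℕ × ℕ))) (k : ℕ) :
    ℕ × ℕ → LExp Λ :=
  fun q => if q.1 < k then KFsyn n f q.1 q.2 else LExp.bot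

/-- `KVFat n f φ j k` is the `L`-expression `KVF_f^φ(x_j)` for `φ` a regular box-formula
of rank `k`. -/
noncomputable def KVFat {Λ : Type u} (n : ℕ) (f : ℕ → Finset (MF Λ (ℕ × ℕ)))
    (φ : MF Λ (ℕ × ℕ)) (j k : ℕ) : LExp Λ :=
  KVFsyn (lowKF n f k) φ (.var j)

/-- A labelled tree-like structure: a set of vertices with relations indexed by `Λ`,
a root, and a label function assigning to every vertex a set of labels from `α`. -/
structure LabTree (Λ : Type u) (α : Type v) where
  V : Type
  R : Λ → V → V → Prop
  root : V
  label : V → Set α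

/-- Derivation trees witnessing that a formula is built from base formulas using only
`∧` and `◇_λ`. -/
inductive BuiltT (Λ : Type u) (V : Type v) : Type (max u v)
  | base : MF Λ V → BuiltT Λ V
  | and : BuiltT Λ V → BuiltT Λ V → BuiltT Λ V
  | dia : Λ → BuiltT Λ V → BuiltT Λ V

/-- The modal formula described by a derivation tree. -/
def BuiltT.formula {Λ : Type u} {V : Type v} : BuiltT Λ V → MF Λ V
  | base φ => φ
  | and a b => .and a.formula b.formula
  | dia l a => .dia l a.formula

/-- The derivation tree uses only base formulas from `A`. -/
def BuiltT.Ok {Λ : Type u} {V : Type v} (A : Set (MF Λ V)) : BuiltT Λ V → Prop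
  | base φ => φ ∈ A
  | and a b => a.Ok A ∧ b.Ok A
  | dia _ a => a.Ok A

/-- Helper for gluing two labelled trees at their roots: the relation on the disjoint sum,
with the edges out of the second root re-attached to the first root. -/
def glueR {Λ : Type u} {W₁ W₂ : Type} (R₁ : Λ → W₁ → W₁ → Prop) (R₂ : Λ → W₂ → W₂ → Prop)
    (r₁ : W₁) (r₂ : W₂) (l : Λ) : W₁ ⊕ W₂ → W₁ ⊕ W₂ → Prop
  | Sum.inl a, Sum.inl b => R₁ l a b
  | Sum.inr a, Sum.inr b => R₂ l a b
  | Sum.inl a, Sum.inr b => a = r₁ ∧ R₂ l r₂ b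
  | Sum.inr _, Sum.inl _ => False

open Classical in
/-- Helper for gluing two labelled trees at their roots: the label function, the glued root
receiving the union of the two root labels. -/
noncomputable def glueLab {α : Type w} {W₁ W₂ : Type} (L₁ : W₁ → Set α) (L₂ : W₂ → Set α)
    (r₁ : W₁) (r₂ : W₂) : W₁ ⊕ W₂ → Set α
  | Sum.inl a => if a = r₁ then L₁ r₁ ∪ L₂ r₂ else L₁ a
  | Sum.inr b => L₂ b

/-- Helper for prefixing a labelled tree with a new root: the relation on `Option W`,
with an `R_{l₀}`-edge from the new root `none` to the old root `r`. -/
def prefR {Λ : Type u} {W : Type} (R : Λ → W → W → Prop) (l₀ : Λ) (r : W) (l : Λ) :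
    Option W → Option W → Prop
  | none, some w => l = l₀ ∧ w = r
  | some a, some b => R l a b
  | _, _ => False

/-- Helper for prefixing a labelled tree with a new root: the label function, the new root
getting the empty label. -/
def prefLab {α : Type w} {W : Type} (L : W → Set α) : Option W → Set α
  | none => ∅
  | some a => L a

/-- The reduced syntactical tree of a formula built from base formulas using `∧` and `◇_λ`:
a single root labelled `{a}` for a base formula `a`; for a conjunction, the two trees
with their roots identified (labels united); for `◇_λ ψ`, a new root with empty label and an
`R_λ`-edge to the root of the tree of `ψ`. -/
noncomputable def TreeOf {Λ : Type u} {V : Type v} : BuiltT Λ V → LabTree Λ (MF Λ V)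
  | .base φ =>
      { V := Unit, R := fun _ _ _ => False, root := (), label := fun _ => {φ} }
  | .and b₁ b₂ =>
      let T₁ := TreeOf b₁
      let T₂ := TreeOf b₂
      { V := {v : T₁.V ⊕ T₂.V // v ≠ Sum.inr T₂.root},
        R := fun l u v => glueR T₁.R T₂.R T₁.root T₂.root l u.1 v.1,
        root := ⟨Sum.inl T₁.root, by exact Sum.inl_ne_inr⟩,
        label := fun v => glueLab T₁.label T₂.label T₁.root T₂.root v.1 }
  | .dia l b =>
      let T := TreeOf b
      { V := Option T.V,
        R := fun l' u v => prefR T.R l T.root l' u v,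
        root := none,
        label := fun v => prefLab T.label v }

/-- Restrictedly positive first-order formulas over the frame language: built from atoms
`y ∈ E` (`E` an `L`-expression) using `∧`, `∨` and the restricted quantifiers
`(∀ y ◁_λ x)` and `(∃ y ◁_λ x)`. -/
inductive KrF (Λ : Type u) : Type u
  | atom : ℕ → LExp Λ → KrF Λ
  | and : KrF Λ → KrF Λ → KrF Λ
  | or : KrF Λ → KrF Λ → KrF Λ
  | all : ℕ → Λ → ℕ → KrF Λ → KrF Λ
  | ex : ℕ → Λ → ℕ → KrF Λ → KrF Λ

namespace KrF
variable {Λ : Type u}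

/-- Truth of a restrictedly positive formula in a frame under an assignment `g` of points to
individual variables; the atom `y ∈ E` is read via the `#`-translation, i.e. as membership
of `g y` in the denotation of `E`. -/
def holds (F : Frame Λ) : (ℕ → F.W) → KrF Λ → Prop
  | g, atom y E => g y ∈ E.den F g
  | g, and a b => holds F g a ∧ holds F g b
  | g, or a b => holds F g a ∨ holds F g b
  | g, all y l x β => ∀ w, F.R l (g x) w → holds F (Function.update g y w) β
  | g, ex y l x β => ∃ w, F.R l (g x) w ∧ holds F (Function.update g y w) β

/-- Free variables. -/
def fv : KrF Λ → Set ℕ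
  | atom y E => insert y E.evars
  | and a b => fv a ∪ fv b
  | or a b => fv a ∪ fv b
  | all y _ x β => insert x (fv β \ {y})
  | ex y _ x β => insert x (fv β \ {y})

/-- Bound variables. -/
def bv : KrF Λ → Set ℕ
  | atom _ _ => ∅
  | and a b => bv a ∪ bv b
  | or a b => bv a ∪ bv b
  | all y _ _ β => insert y (bv β)
  | ex y _ _ β => insert y (bv β)

/-- No two distinct quantifier occurrences bind the same variable. -/
def CleanBound : KrF Λ → Prop
  | atom _ _ => True
  | and a b => CleanBound a ∧ CleanBound b ∧ bv a ∩ bv b = ∅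
  | or a b => CleanBound a ∧ CleanBound b ∧ bv a ∩ bv b = ∅
  | all y _ _ β => CleanBound β ∧ y ∉ bv β
  | ex y _ _ β => CleanBound β ∧ y ∉ bv β

/-- Clean formulas: no variable occurs both free and bound, and no two distinct quantifier
occurrences bind the same variable. -/
def Clean (φ : KrF Λ) : Prop := fv φ ∩ bv φ = ∅ ∧ CleanBound φ

/-- All the `L`-expressions occurring in atoms of the formula satisfy `P`. -/
def AtomsAll (P : LExp Λ → Prop) : KrF Λ → Prop
  | atom _ E => P E
  | and a b => AtomsAll P a ∧ AtomsAll P b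
  | or a b => AtomsAll P a ∧ AtomsAll P b
  | all _ _ _ β => AtomsAll P β
  | ex _ _ _ β => AtomsAll P β

/-- Quantifier-free formulas (built from atoms using only `∧` and `∨`). -/
def QFree : KrF Λ → Prop
  | atom _ _ => True
  | and a b => QFree a ∧ QFree b
  | or a b => QFree a ∧ QFree b
  | all _ _ _ _ => False
  | ex _ _ _ _ => False

/-- Formulas built from atoms using only `∧`, `∨` and restricted universal quantification
(no existential quantifier). -/
def NoEx : KrF Λ → Prop
  | atom _ _ => True
  | and a b => NoEx a ∧ NoEx b
  | or a b => NoEx a ∧ NoEx b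
  | all _ _ _ β => NoEx β
  | ex _ _ _ _ => False

/-- `GKok U e φ`: every variable occurring in an `L`-expression of an atom of `φ` is
inherently universal. Here `U` is the set of variables that are inherently universal so far
(initially the free variables) and `e` records whether we are within the scope of an
existential quantifier. -/
def GKok : Set ℕ → Bool → KrF Λ → Prop
  | U, _, atom _ E => E.evars ⊆ U
  | U, e, and a b => GKok U e a ∧ GKok U e b
  | U, e, or a b => GKok U e a ∧ GKok U e b
  | U, false, all y _ _ β => GKok (insert y U) false β
  | U, true, all _ _ _ β => GKok U true β
  | U, _, ex _ _ _ β => GKok U true β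

end KrF

/-- A generalized Kracht formula with free variables: clean, restrictedly positive with safe
atoms, and in every atom `y ∈ E` all variables of `E` are inherently universal. -/
def IsGenKrachtFV {Λ : Type u} (α : KrF Λ) : Prop :=
  α.Clean ∧ α.AtomsAll Safe ∧ α.GKok α.fv false

/-- A generalized Kracht formula: a generalized Kracht formula with free variables whose
only free variable is `x0`. -/
def IsGenKracht {Λ : Type u} (α : KrF Λ) (x0 : ℕ) : Prop :=
  IsGenKrachtFV α ∧ α.fv = {x0}

/-- Generalized Sahlqvist antecedents: built from regular box-formulas and negative
formulas using only `∧`, `∨`, `◇_λ`. -/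
inductive GSAnt {Λ : Type u} : MF Λ (ℕ × ℕ) → Prop
  | reg {φ p} : RegBF Prod.fst φ p → GSAnt φ
  | neg {φ} : Positive φ → GSAnt (.neg φ)
  | and {a b} : GSAnt a → GSAnt b → GSAnt (.and a b)
  | or {a b} : GSAnt a → GSAnt b → GSAnt (.or a b)
  | dia (l) {a} : GSAnt a → GSAnt (.dia l a)

/-- Generalized Sahlqvist formulas: built from generalized Sahlqvist implications
`GSA → ⊥` by applying boxes and conjunctions, and disjunctions only to formulas without
common propositional variables. -/
inductive GSF {Λ : Type u} : MF Λ (ℕ × ℕ) → Prop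
  | impl {a} : GSAnt a → GSF (.imp a .bot)
  | box (l) {a} : GSF a → GSF (.box l a)
  | and {a b} : GSF a → GSF b → GSF (.and a b)
  | or {a b} : GSF a → GSF b → MF.vars a ∩ MF.vars b = ∅ → GSF (.or a b)

open Classical in
/-- The modal translation `E^T` of a quasi-safe expression: safe subexpressions are
replaced by their associated propositional variables `p_E`, and `∩, ∪, R^{-1}_λ, R^□_λ`
become `∧, ∨, ◇_λ, □_λ`. -/
noncomputable def Etrans {Λ : Type u} (pE : LExp Λ → ℕ × ℕ) : LExp Λ → MF Λ (ℕ × ℕ)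
  | .var i => .var (pE (.var i))
  | .top => .top
  | .bot => .bot
  | .inter a b =>
      if Safe (LExp.inter a b) then .var (pE (.inter a b))
      else .and (Etrans pE a) (Etrans pE b)
  | .union a b =>
      if Safe (LExp.union a b) then .var (pE (.union a b))
      else .or (Etrans pE a) (Etrans pE b)
  | .rinv l a =>
      if Safe (LExp.rinv l a) then .var (pE (.rinv l a)) else .dia l (Etrans pE a)
  | .rbox l a =>
      if Safe (LExp.rbox l a) then .var (pE (.rbox l a)) else .box l (Etrans pE a)
  | .rfw l a => if Safe (LExp.rfw l a) then .var (pE (.rfw l a)) else .bot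

/-- A finite disjunction of modal formulas (empty disjunction is `⊥`). -/
def orList {Λ : Type u} {V : Type v} : List (MF Λ V) → MF Λ V
  | [] => .bot
  | a :: as => .or a (orList as)
/-!
Every safe expression `E` occurring in `α` gets a propositional variable `p_E` of rank `|E|` and a
regular box-formula, read off the `∩`/`R_λ` spine of `E`, saying that `p_E` holds throughout `E`.
The valuation `p_E ↦ E` satisfies these defining formulas and, by induction on `|E|`, is the least
valuation that does.

Distributing `∨` over `∧` and over the universal quantifiers turns `α` into a conjunction of clauses
`(∀ y₁ ◁ x₁) … (∀ yₙ ◁ xₙ) (lit₁ ∨ … ∨ litₘ)`, a literal being a positive formula in the `p_E`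
evaluated at one variable under `p_E ↦ E`. A variable bound below an existential quantifier occurs
in no expression, so such quantifiers are absorbed into the literals as `◇`/`□`, through DNF/CNF.

For a clause, let `A` be the tree of `◇_λ`'s along its quantifiers whose nodes carry the defining
formulas rooted there and the negations of the literals located there. By minimality, `A` is
satisfiable at `w` iff the clause fails at `w`: the clause is the local correspondent of `A → ⊥`.
-/

namespace LExp

variable {Λ : Type u}

def size : LExp Λ → ℕ
  | var _ | top | bot => 1
  | inter a b | union a b => a.size + b.size + 1
  | rinv _ a | rbox _ a | rfw _ a => a.size + 1

def subexps : LExp Λ → List (LExp Λ)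
  | var i => [var i]
  | top => [top]
  | bot => [bot]
  | inter a b => inter a b :: (a.subexps ++ b.subexps)
  | union a b => union a b :: (a.subexps ++ b.subexps)
  | rinv l a => rinv l a :: a.subexps
  | rbox l a => rbox l a :: a.subexps
  | rfw l a => rfw l a :: a.subexps

theorem den_congr {F : Frame Λ} {g g' : ℕ → F.W} (E : LExp Λ)
    (h : ∀ i ∈ E.evars, g i = g' i) : E.den F g = E.den F g' := by
  induction E <;> simp_all [den, evars]

end LExp

namespace Subexp

variable {Λ : Type u} {a b c : LExp Λ}

theorem trans (h₁ : Subexp a b) (h₂ : Subexp b c) : Subexp a c := by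
  induction h₂ with
  | refl => exact h₁
  | interL _ ih => exact .interL (ih h₁)
  | interR _ ih => exact .interR (ih h₁)
  | unionL _ ih => exact .unionL (ih h₁)
  | unionR _ ih => exact .unionR (ih h₁)
  | rinv l _ ih => exact .rinv l (ih h₁)
  | rbox l _ ih => exact .rbox l (ih h₁)
  | rfw l _ ih => exact .rfw l (ih h₁)

theorem size_le (h : Subexp a b) : a.size ≤ b.size := by
  induction h <;> (try simp only [LExp.size]) <;> omega

theorem evars_subset (h : Subexp a b) : a.evars ⊆ b.evars := by
  induction h <;> simp_all [LExp.evars, Set.subset_def]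

end Subexp

theorem LExp.mem_subexps {Λ : Type u} {e E : LExp Λ} : e ∈ E.subexps ↔ Subexp e E := by
  constructor
  · intro h
    induction E with
    | var | top | bot => simp only [subexps, List.mem_singleton] at h; exact h ▸ .refl _
    | inter a b iha ihb =>
      simp only [subexps, List.mem_cons, List.mem_append] at h
      rcases h with rfl | h | h
      exacts [.refl _, .interL (iha h), .interR (ihb h)]
    | union a b iha ihb =>
      simp only [subexps, List.mem_cons, List.mem_append] at h
      rcases h with rfl | h | h
      exacts [.refl _, .unionL (iha h), .unionR (ihb h)]
    | rinv l a ih | rbox l a ih | rfw l a ih =>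
      simp only [subexps, List.mem_cons] at h
      rcases h with rfl | h
      exacts [.refl _, by constructor; exact ih h]
  · intro h
    induction h with
    | refl e => cases e <;> simp [subexps]
    | _ => simp_all [subexps]

section Safety

variable {Λ : Type u}

theorem safeFor_inter_iff {a b : LExp Λ} : SafeFor (.inter a b) ↔ SafeFor a ∨ SafeFor b := by
  constructor
  · rintro (_ | _ | h | h)
    exacts [.inl h, .inr h]
  · rintro (h | h)
    exacts [.interL h, .interR h]

theorem safe_var (i : ℕ) : Safe (LExp.var i : LExp Λ) :=
  ⟨.var i, fun _ _ h => by cases h⟩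

theorem Safe.rfw_of_subexp {E a : LExp Λ} {l : Λ} (hE : Safe E) (h : Subexp (.rfw l a) E) :
    Safe (.rfw l a) :=
  ⟨.rfw l (hE.2 l a h), fun l' a' h' => hE.2 l' a' (h'.trans h)⟩

theorem Safe.quasiSafe_of_subexp {E : LExp Λ} (hE : Safe E) {Q : LExp Λ} (hQ : Subexp Q E) :
    QuasiSafe Q := by
  induction Q with
  | var i => exact .safe (safe_var i)
  | top => exact .top
  | bot => exact .bot
  | inter a b iha ihb =>
    exact .inter (iha ((Subexp.interL (.refl a)).trans hQ))
      (ihb ((Subexp.interR (.refl b)).trans hQ))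
  | union a b iha ihb =>
    exact .union (iha ((Subexp.unionL (.refl a)).trans hQ))
      (ihb ((Subexp.unionR (.refl b)).trans hQ))
  | rinv l a ih => exact .rinv l (ih ((Subexp.rinv l (.refl a)).trans hQ))
  | rbox l a ih => exact .rbox l (ih ((Subexp.rbox l (.refl a)).trans hQ))
  | rfw l a _ => exact .safe (hE.rfw_of_subexp hQ)

end Safety

theorem or_forall_mem_iff {α β : Type*} {A : List α} {B : List β} {P : α → Prop}
    {Q : β → Prop} : ((∀ a ∈ A, P a) ∨ ∀ b ∈ B, Q b) ↔ ∀ a ∈ A, ∀ b ∈ B, P a ∨ Q b := by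
  constructor
  · rintro (h | h) a ha b hb
    exacts [.inl (h a ha), .inr (h b hb)]
  · intro h
    by_contra! hn
    obtain ⟨⟨a, ha, hPa⟩, ⟨b, hb, hQb⟩⟩ := hn
    exact (h a ha b hb).elim hPa hQb

section ModalFormulas

variable {Λ : Type u} {V : Type v} {F : Frame Λ}

theorem Positive.sat_mono {θ θ' : V → Set F.W} {φ : MF Λ V} (hφ : Positive φ)
    (h : ∀ q ∈ φ.vars, θ q ⊆ θ' q) {x : F.W} (hx : sat F θ x φ) : sat F θ' x φ := by
  induction hφ generalizing x with
  | var p => exact h p rfl hx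
  | top | bot => exact hx
  | and _ _ iha ihb =>
    exact ⟨iha (fun q hq => h q (.inl hq)) hx.1, ihb (fun q hq => h q (.inr hq)) hx.2⟩
  | or _ _ iha ihb => exact hx.imp (iha fun q hq => h q (.inl hq)) (ihb fun q hq => h q (.inr hq))
  | dia l _ ih => exact hx.imp fun y hy => ⟨hy.1, ih h hy.2⟩
  | box l _ ih => exact fun y hy => ih h (hx y hy)

theorem sat_foldr_and {θ : V → Set F.W} {x : F.W} (u : MF Λ V) (ls : List (MF Λ V)) :
    sat F θ x (ls.foldr .and u) ↔ (∀ φ ∈ ls, sat F θ x φ) ∧ sat F θ x u := by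
  induction ls <;> simp_all [sat, and_assoc]

theorem sat_foldr_or {θ : V → Set F.W} {x : F.W} (u : MF Λ V) (ls : List (MF Λ V)) :
    sat F θ x (ls.foldr .or u) ↔ (∃ φ ∈ ls, sat F θ x φ) ∨ sat F θ x u := by
  induction ls <;> simp_all [sat, or_assoc]

theorem GSAnt.foldr_and {u : MF Λ (ℕ × ℕ)} (hu : GSAnt u) :
    ∀ {ls : List (MF Λ (ℕ × ℕ))}, (∀ φ ∈ ls, GSAnt φ) → GSAnt (ls.foldr .and u)
  | [], _ => hu
  | φ :: _, h => .and (h φ List.mem_cons_self)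
      (GSAnt.foldr_and hu fun ψ hψ => h ψ (List.mem_cons_of_mem _ hψ))

theorem GSF.foldr_and {u : MF Λ (ℕ × ℕ)} (hu : GSF u) :
    ∀ {ls : List (MF Λ (ℕ × ℕ))}, (∀ φ ∈ ls, GSF φ) → GSF (ls.foldr .and u)
  | [], _ => hu
  | φ :: _, h => .and (h φ List.mem_cons_self)
      (GSF.foldr_and hu fun ψ hψ => h ψ (List.mem_cons_of_mem _ hψ))

end ModalFormulas

section ModalTranslation

variable {Λ : Type u} {F : Frame Λ} (pE : LExp Λ → ℕ × ℕ)

theorem Etrans_of_safe {e : LExp Λ} (h : Safe e) : Etrans pE e = .var (pE e) := by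
  cases h.1 <;> simp [Etrans, h]

theorem positive_Etrans (e : LExp Λ) : Positive (Etrans pE e) := by
  induction e <;> simp only [Etrans] <;> (try split) <;> constructor <;> assumption

variable {pE}

theorem exists_of_mem_vars_Etrans {e : LExp Λ} {q : ℕ × ℕ} (hq : q ∈ (Etrans pE e).vars) :
    ∃ E, Subexp E e ∧ Safe E ∧ q = pE E := by
  induction e with
  | var i => exact ⟨_, .refl _, safe_var i, hq⟩
  | top | bot => simp [Etrans, MF.vars] at hq
  | inter a b iha ihb =>
    simp only [Etrans] at hq
    split at hq
    · exact ⟨_, .refl _, ‹_›, hq⟩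
    · rcases hq with hq | hq
      · obtain ⟨E, h, hs, rfl⟩ := iha hq; exact ⟨E, .interL h, hs, rfl⟩
      · obtain ⟨E, h, hs, rfl⟩ := ihb hq; exact ⟨E, .interR h, hs, rfl⟩
  | union a b iha ihb =>
    simp only [Etrans] at hq
    split at hq
    · exact ⟨_, .refl _, ‹_›, hq⟩
    · rcases hq with hq | hq
      · obtain ⟨E, h, hs, rfl⟩ := iha hq; exact ⟨E, .unionL h, hs, rfl⟩
      · obtain ⟨E, h, hs, rfl⟩ := ihb hq; exact ⟨E, .unionR h, hs, rfl⟩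
  | rinv l a ih | rbox l a ih =>
    simp only [Etrans] at hq
    split at hq
    · exact ⟨_, .refl _, ‹_›, hq⟩
    · obtain ⟨E, h, hs, rfl⟩ := ih hq; exact ⟨E, by constructor; exact h, hs, rfl⟩
  | rfw l a ih =>
    simp only [Etrans] at hq
    split at hq
    · exact ⟨_, .refl _, ‹_›, hq⟩
    · simp [MF.vars] at hq

theorem QuasiSafe.sat_Etrans_iff {θ : ℕ × ℕ → Set F.W} {g : ℕ → F.W} {Q : LExp Λ}
    (hQ : QuasiSafe Q) (H : ∀ E, Subexp E Q → Safe E → θ (pE E) = E.den F g) (x : F.W) :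
    sat F θ x (Etrans pE Q) ↔ x ∈ Q.den F g := by
  induction hQ generalizing x with
  | safe h => rw [Etrans_of_safe pE h, ← H _ (.refl _) h]; rfl
  | top | bot => simp [Etrans, sat, LExp.den]
  | inter _ _ iha ihb =>
    simp only [Etrans]; split
    · next h => rw [← H _ (.refl _) h]; rfl
    · simp only [sat, LExp.den, iha (fun E h => H E (.interL h)), ihb (fun E h => H E (.interR h))]
      rfl
  | union _ _ iha ihb =>
    simp only [Etrans]; split
    · next h => rw [← H _ (.refl _) h]; rfl
    · simp only [sat, LExp.den, iha (fun E h => H E (.unionL h)), ihb (fun E h => H E (.unionR h))]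
      rfl
  | rinv l _ ih =>
    simp only [Etrans]; split
    · next h => rw [← H _ (.refl _) h]; rfl
    · simp only [sat, LExp.den, ih (fun E h => H E (.rinv l h))]; rfl
  | rbox l _ ih =>
    simp only [Etrans]; split
    · next h => rw [← H _ (.refl _) h]; rfl
    · simp only [sat, LExp.den, ih (fun E h => H E (.rbox l h))]; rfl

end ModalTranslation

namespace Kracht

open Classical Function

variable {Λ : Type u} {F : Frame Λ} {L : List (LExp Λ)}

def SubClosed (L : List (LExp Λ)) : Prop := ∀ E ∈ L, ∀ e, Subexp e E → e ∈ L

/-- The propositional variable `p_E` standing for a member `E` of `L`. Its rank is the size of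
`E`, so the defining formula of a safe `E` only mentions variables of rank below that of `p_E`. -/
noncomputable def varOf (L : List (LExp Λ)) (E : LExp Λ) : ℕ × ℕ := (E.size, L.idxOf E)

/-- The valuation `p_E ↦ E`, read off from the index component of `p_E`. -/
noncomputable def denVal (F : Frame Λ) (L : List (LExp Λ)) (g : ℕ → F.W) : ℕ × ℕ → Set F.W :=
  fun q => if h : q.2 < L.length then L[q.2].den F g else ∅

theorem denVal_varOf {E : LExp Λ} (h : E ∈ L) (g : ℕ → F.W) :
    denVal F L g (varOf L E) = E.den F g := by
  simp [denVal, varOf, List.idxOf_lt_length_of_mem h, List.getElem_idxOf]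

/-- The individual variable at the bottom of the `∩`/`R_λ` spine of a safe expression. -/
noncomputable def safeRoot : LExp Λ → ℕ
  | .var i => i
  | .rfw _ a => safeRoot a
  | .inter a b => if SafeFor a then safeRoot a else safeRoot b
  | _ => 0

/-- The points reached from `x` along the spine of a safe expression, the side conditions `b`
of the intersections being read as `side b`. -/
noncomputable def spineDen (F : Frame Λ) (side : LExp Λ → Set F.W) : LExp Λ → F.W → Set F.W
  | .var _, x => {x}
  | .rfw l a, x => Rfwd F l (spineDen F side a x)
  | .inter a b, x =>
      if SafeFor a then spineDen F side a x ∩ side b else spineDen F side b x ∩ side a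
  | _, _ => ∅

/-- `defFormula pE E κ` is the regular box-formula `□ … (Etrans b → □ … κ)` read off the spine of
the safe expression `E`; with `κ = p_E` it says that `p_E` holds throughout `E`. -/
noncomputable def defFormula (pE : LExp Λ → ℕ × ℕ) : LExp Λ → MF Λ (ℕ × ℕ) → MF Λ (ℕ × ℕ)
  | .var _, κ => κ
  | .rfw l a, κ => defFormula pE a (.box l κ)
  | .inter a b, κ =>
      if SafeFor a then defFormula pE a (.imp (Etrans pE b) κ)
      else defFormula pE b (.imp (Etrans pE a) κ)
  | _, κ => κ

theorem safeRoot_mem_evars {e : LExp Λ} (he : SafeFor e) : safeRoot e ∈ e.evars := by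
  induction e with
  | var i => rfl
  | rfw l a ih => cases he; exact ih ‹_›
  | inter a b iha ihb =>
    by_cases ha : SafeFor a
    · simp only [safeRoot, ha, if_true]; exact .inl (iha ha)
    · simp only [safeRoot, ha, if_false]
      exact .inr (ihb ((safeFor_inter_iff.1 he).resolve_left ha))
  | _ => cases he

theorem den_eq_spineDen {e : LExp Λ} (he : SafeFor e) (g : ℕ → F.W) :
    e.den F g = spineDen F (LExp.den F g) e (g (safeRoot e)) := by
  induction e with
  | var i => rfl
  | rfw l a ih => cases he; simp only [LExp.den, spineDen, safeRoot, ih ‹_›]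
  | inter a b iha ihb =>
    by_cases ha : SafeFor a
    · simp only [LExp.den, spineDen, safeRoot, ha, if_true, ← iha ha]
    · simp only [LExp.den, spineDen, safeRoot, ha, if_false,
        ← ihb ((safeFor_inter_iff.1 he).resolve_left ha), Set.inter_comm]
  | _ => cases he

theorem spineDen_mono {side side' : LExp Λ → Set F.W} {e : LExp Λ}
    (h : ∀ b, Subexp b e → b.size < e.size → side b ⊆ side' b) (x : F.W) :
    spineDen F side e x ⊆ spineDen F side' e x := by
  induction e with
  | rfw l a ih =>
    rintro z ⟨v, hv, hva⟩
    refine ⟨v, hv, ih (fun b hb hlt => h b (.rfw l hb) ?_) hva⟩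
    simp only [LExp.size]; omega
  | inter a b iha ihb =>
    have hsa : a.size < (LExp.inter a b).size := by simp only [LExp.size]; omega
    have hsb : b.size < (LExp.inter a b).size := by simp only [LExp.size]; omega
    simp only [spineDen]
    split
    · exact Set.inter_subset_inter
        (iha fun c hc hlt => h c (.interL hc) (hlt.trans hsa)) (h b (.interR (.refl b)) hsb)
    · exact Set.inter_subset_inter
        (ihb fun c hc hlt => h c (.interR hc) (hlt.trans hsb)) (h a (.interL (.refl a)) hsa)
  | _ => exact le_rfl

theorem sat_defFormula_iff {pE : LExp Λ → ℕ × ℕ} {θ : ℕ × ℕ → Set F.W} {e : LExp Λ}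
    (he : SafeFor e) (κ : MF Λ (ℕ × ℕ)) (x : F.W) :
    sat F θ x (defFormula pE e κ) ↔
      ∀ z ∈ spineDen F (fun b => {z | sat F θ z (Etrans pE b)}) e x, sat F θ z κ := by
  induction e generalizing κ with
  | var i => simp [defFormula, spineDen]
  | rfw l a ih =>
    cases he
    simp only [defFormula, spineDen, ih ‹_›, sat, Rfwd]
    exact ⟨fun h z ⟨v, hv, hva⟩ => h v hva z hv, fun h v hva z hv => h z ⟨v, hv, hva⟩⟩
  | inter a b iha ihb =>
    by_cases ha : SafeFor a
    · simp only [defFormula, spineDen, ha, if_true, iha ha, sat]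
      exact ⟨fun h z hz => h z hz.1 hz.2, fun h z hz hb => h z ⟨hz, hb⟩⟩
    · simp only [defFormula, spineDen, ha, if_false,
        ihb ((safeFor_inter_iff.1 he).resolve_left ha), sat]
      exact ⟨fun h z hz => h z hz.1 hz.2, fun h z hz hb => h z ⟨hz, hb⟩⟩
  | _ => cases he

theorem defFormula_regular {e : LExp Λ} (he : SafeFor e)
    {κ : MF Λ (ℕ × ℕ)} {p : ℕ × ℕ} (hκ : RegBF Prod.fst κ p) (hp : e.size ≤ p.1) :
    RegBF Prod.fst (defFormula (varOf L) e κ) p := by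
  have side : ∀ b κ, RegBF Prod.fst κ p → b.size < p.1 →
      RegBF Prod.fst (.imp (Etrans (varOf L) b) κ) p := by
    refine fun b κ hκ hb => .imp (positive_Etrans _ b) (fun q hq => ?_) hκ
    obtain ⟨E, hE, -, rfl⟩ := exists_of_mem_vars_Etrans hq
    exact hE.size_le.trans_lt hb
  induction e generalizing κ with
  | var i => exact hκ
  | rfw l a ih =>
    cases he
    exact ih ‹_› (.box l hκ) (by simp only [LExp.size] at hp; omega)
  | inter a b iha ihb =>
    simp only [LExp.size] at hp
    by_cases ha : SafeFor a
    · simp only [defFormula, ha, if_true]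
      exact iha ha (side b κ hκ (by omega)) (by omega)
    · simp only [defFormula, ha, if_false]
      exact ihb ((safeFor_inter_iff.1 he).resolve_left ha) (side a κ hκ (by omega)) (by omega)
  | _ => cases he

theorem den_subset_sat_Etrans (hcl : SubClosed L) {E b : LExp Λ} (hE : Safe E) (hEL : E ∈ L)
    (hb : Subexp b E) {θ : ℕ × ℕ → Set F.W} {g : ℕ → F.W}
    (H : ∀ E', Subexp E' b → Safe E' → E'.den F g ⊆ θ (varOf L E')) :
    b.den F g ⊆ {x | sat F θ x (Etrans (varOf L) b)} := by
  intro x hx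
  have hL : ∀ E', Subexp E' b → E' ∈ L := fun E' h => hcl E hEL E' (h.trans hb)
  refine (positive_Etrans _ b).sat_mono (θ := denVal F L g) (fun q hq => ?_) ?_
  · obtain ⟨E', hE', hs, rfl⟩ := exists_of_mem_vars_Etrans hq
    rw [denVal_varOf (hL E' hE')]
    exact H E' hE' hs
  · exact ((hE.quasiSafe_of_subexp hb).sat_Etrans_iff
      (fun E' h _ => denVal_varOf (hL E' h) g) x).2 hx

theorem sat_defFormula_denVal (hcl : SubClosed L) {E : LExp Λ} (hE : Safe E) (hEL : E ∈ L)
    (g : ℕ → F.W) :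
    sat F (denVal F L g) (g (safeRoot E)) (defFormula (varOf L) E (.var (varOf L E))) := by
  rw [sat_defFormula_iff hE.1]
  intro z hz
  show z ∈ denVal F L g (varOf L E)
  rw [denVal_varOf hEL, den_eq_spineDen hE.1]
  refine spineDen_mono (fun b hb _ x hx => ?_) _ hz
  exact ((hE.quasiSafe_of_subexp hb).sat_Etrans_iff
    (fun E' h _ => denVal_varOf (hcl E hEL E' (h.trans hb)) g) x).1 hx

/-- Induction on the size: the side conditions along the spine of `E` are smaller expressions. -/
theorem den_subset_of_sat_defFormula (hcl : SubClosed L) {D : Set (LExp Λ)}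
    (hD : ∀ E ∈ D, E ∈ L ∧ Safe E) (hDcl : ∀ E ∈ D, ∀ E', Subexp E' E → Safe E' → E' ∈ D)
    {θ : ℕ × ℕ → Set F.W} {g : ℕ → F.W}
    (hsat : ∀ E ∈ D, sat F θ (g (safeRoot E)) (defFormula (varOf L) E (.var (varOf L E)))) :
    ∀ E ∈ D, E.den F g ⊆ θ (varOf L E) := by
  suffices ∀ n, ∀ E ∈ D, E.size = n → E.den F g ⊆ θ (varOf L E) from
    fun E hE => this _ E hE rfl
  intro n
  induction n using Nat.strong_induction_on with
  | _ n ih =>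
  rintro E hED rfl x hx
  obtain ⟨hEL, hE⟩ := hD E hED
  rw [den_eq_spineDen hE.1] at hx
  refine (sat_defFormula_iff hE.1 _ _).1 (hsat E hED) x (spineDen_mono (fun b hb hlt => ?_) _ hx)
  refine den_subset_sat_Etrans hcl hE hEL hb fun E' hE' hs => ?_
  exact ih _ (hE'.size_le.trans_lt hlt) E' (hDcl E hED E' (hE'.trans hb) hs) rfl

/-- `(x, φ)`: the positive formula `φ` holds at the point assigned to `x` under `denVal`. -/
abbrev Lit (Λ : Type u) := ℕ × MF Λ (ℕ × ℕ)

/-- `(y, l, x)`: the restricted quantifier `(∀ y ◁_l x)`. -/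
abbrev Edge (Λ : Type u) := ℕ × Λ × ℕ

/-- A clause `(∀ y₁ ◁ x₁) … (∀ yₙ ◁ xₙ) (lit₁ ∨ … ∨ litₘ)`. -/
structure Clause (Λ : Type u) where
  edges : List (Edge Λ)
  lits : List (Lit Λ)

def LitSem (F : Frame Λ) (L : List (LExp Λ)) (g : ℕ → F.W) (p : Lit Λ) : Prop :=
  sat F (denVal F L g) (g p.1) p.2

inductive PosOver (L : List (LExp Λ)) (U : Set ℕ) : MF Λ (ℕ × ℕ) → Prop
  | var {E : LExp Λ} : E ∈ L → Safe E → E.evars ⊆ U → PosOver L U (.var (varOf L E))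
  | top : PosOver L U .top
  | bot : PosOver L U .bot
  | and {a b} : PosOver L U a → PosOver L U b → PosOver L U (.and a b)
  | or {a b} : PosOver L U a → PosOver L U b → PosOver L U (.or a b)
  | dia (l) {a} : PosOver L U a → PosOver L U (.dia l a)
  | box (l) {a} : PosOver L U a → PosOver L U (.box l a)

namespace PosOver

variable {U : Set ℕ} {φ : MF Λ (ℕ × ℕ)}

theorem positive (h : PosOver L U φ) : Positive φ := by
  induction h <;> constructor <;> assumption

theorem mono (h : PosOver L U φ) {U' : Set ℕ} (hU : U ⊆ U') : PosOver L U' φ := by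
  induction h with
  | var hEL hE hEU => exact .var hEL hE (hEU.trans hU)
  | top => exact .top
  | bot => exact .bot
  | and _ _ iha ihb => exact .and iha ihb
  | or _ _ iha ihb => exact .or iha ihb
  | dia l _ ih => exact .dia l ih
  | box l _ ih => exact .box l ih

theorem foldr {op : MF Λ (ℕ × ℕ) → MF Λ (ℕ × ℕ) → MF Λ (ℕ × ℕ)}
    (hop : ∀ {a b}, PosOver L U a → PosOver L U b → PosOver L U (op a b))
    {u : MF Λ (ℕ × ℕ)} (hu : PosOver L U u) :
    ∀ {ls : List (MF Λ (ℕ × ℕ))}, (∀ φ ∈ ls, PosOver L U φ) → PosOver L U (ls.foldr op u)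
  | [], _ => hu
  | φ :: _, h => hop (h φ List.mem_cons_self)
      (foldr hop hu fun ψ hψ => h ψ (List.mem_cons_of_mem _ hψ))

theorem sat_denVal_congr (h : PosOver L U φ) {g g' : ℕ → F.W} (hg : ∀ v ∈ U, g v = g' v)
    (x : F.W) : sat F (denVal F L g) x φ ↔ sat F (denVal F L g') x φ := by
  induction h generalizing x with
  | @var E hEL _ hEU =>
    simp only [sat, denVal_varOf hEL, E.den_congr fun i hi => hg i (hEU hi)]
  | _ => simp_all [sat]

theorem sat_of_sat_denVal (h : PosOver L U φ) {g : ℕ → F.W} {θ : ℕ × ℕ → Set F.W}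
    (hθ : ∀ E ∈ L, Safe E → E.evars ⊆ U → E.den F g ⊆ θ (varOf L E)) {x : F.W}
    (hx : sat F (denVal F L g) x φ) : sat F θ x φ := by
  induction h generalizing x with
  | var hEL hE hEU => exact hθ _ hEL hE hEU ((denVal_varOf hEL g).subst (motive := (x ∈ ·)) hx)
  | top | bot => exact hx
  | and _ _ iha ihb => exact ⟨iha hx.1, ihb hx.2⟩
  | or _ _ iha ihb => exact hx.imp iha ihb
  | dia l _ ih => exact hx.imp fun y hy => ⟨hy.1, ih hy.2⟩
  | box l _ ih => exact fun y hy => ih (hx y hy)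

end PosOver

def LitOK (L : List (LExp Λ)) (U S : Set ℕ) (p : Lit Λ) : Prop :=
  p.1 ∈ S ∧ PosOver L U p.2

theorem LitOK.mono {U U' S S' : Set ℕ} {p : Lit Λ} (h : LitOK L U S p) (hU : U ⊆ U')
    (hS : S ⊆ S') : LitOK L U' S' p :=
  ⟨hS h.1, h.2.mono hU⟩

theorem LitOK.litSem_congr {U : Set ℕ} {p : Lit Λ} (hp : LitOK L U U p) {g g' : ℕ → F.W}
    (hg : ∀ v ∈ U, g v = g' v) : LitSem F L g p ↔ LitSem F L g' p := by
  rw [LitSem, LitSem, hg _ hp.1]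
  exact hp.2.sat_denVal_congr hg _

theorem LitOK.litSem_update_iff {U S : Set ℕ} {p : Lit Λ} (hp : LitOK L U S p) {y : ℕ}
    (hy : y ∉ U) (g : ℕ → F.W) (u : F.W) :
    LitSem F L (update g y u) p ↔
      if p.1 = y then sat F (denVal F L g) u p.2 else LitSem F L g p := by
  rw [LitSem, hp.2.sat_denVal_congr fun v hv => update_of_ne (ne_of_mem_of_not_mem hv hy) u g]
  split
  · next h => rw [h, update_self]
  · next h => rw [update_of_ne h]; rfl

def bvars (es : List (Edge Λ)) : Set ℕ := {y | ∃ e ∈ es, e.1 = y}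

@[simp] theorem bvars_nil : bvars ([] : List (Edge Λ)) = ∅ := by simp [bvars]

@[simp] theorem bvars_cons (e : Edge Λ) (es : List (Edge Λ)) :
    bvars (e :: es) = insert e.1 (bvars es) := by
  ext; simp [bvars, eq_comm]

@[simp] theorem bvars_append (es es' : List (Edge Λ)) :
    bvars (es ++ es') = bvars es ∪ bvars es' := by
  ext; simp [bvars, or_and_right, exists_or]

def EdgesOK : Set ℕ → List (Edge Λ) → Prop
  | _, [] => True
  | U, (y, _, x) :: es => x ∈ U ∧ y ∉ U ∧ EdgesOK (insert y U) es

theorem EdgesOK.not_mem {U : Set ℕ} {es : List (Edge Λ)} (h : EdgesOK U es) {y : ℕ}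
    (hy : y ∈ bvars es) : y ∉ U := by
  induction es generalizing U with
  | nil => simp at hy
  | cons e es ih =>
    obtain ⟨y', l, x⟩ := e
    obtain ⟨-, hy', h⟩ := h
    rw [bvars_cons] at hy
    rcases hy with rfl | hy
    exacts [hy', fun hU => ih h hy (Set.mem_insert_of_mem _ hU)]

theorem EdgesOK.mono {U U' : Set ℕ} {es : List (Edge Λ)} (h : EdgesOK U es) (hU : U ⊆ U')
    (hd : ∀ y ∈ bvars es, y ∉ U') : EdgesOK U' es := by
  induction es generalizing U U' with
  | nil => trivial
  | cons e es ih =>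
    obtain ⟨y, l, x⟩ := e
    obtain ⟨hx, -, h⟩ := h
    refine ⟨hU hx, hd y (by simp), ih h (Set.insert_subset_insert hU) fun z hz => ?_⟩
    rintro (rfl | hzU)
    · exact h.not_mem hz (Set.mem_insert _ _)
    · exact hd z (by simp [hz]) hzU

theorem EdgesOK.append {U : Set ℕ} {es es' : List (Edge Λ)} (h : EdgesOK U es)
    (h' : EdgesOK U es') (hd : Disjoint (bvars es) (bvars es')) : EdgesOK U (es ++ es') := by
  induction es generalizing U with
  | nil => exact h'
  | cons e es ih =>
    obtain ⟨y, l, x⟩ := e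
    obtain ⟨hx, hy, h⟩ := h
    simp only [bvars_cons, Set.disjoint_insert_left] at hd
    refine ⟨hx, hy, ih h (h'.mono (Set.subset_insert _ _) fun z hz => ?_) hd.2⟩
    rintro (rfl | hzU)
    exacts [hd.1 hz, h'.not_mem hz hzU]

def edgesAll (F : Frame Λ) : List (Edge Λ) → ((ℕ → F.W) → Prop) → (ℕ → F.W) → Prop
  | [], k, g => k g
  | (y, l, x) :: es, k, g => ∀ u, F.R l (g x) u → edgesAll F es k (update g y u)

theorem edgesAll_append (es es' : List (Edge Λ)) (k : (ℕ → F.W) → Prop) (g : ℕ → F.W) :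
    edgesAll F (es ++ es') k g ↔ edgesAll F es (edgesAll F es' k) g := by
  induction es generalizing g with
  | nil => rfl
  | cons e es ih => exact forall_congr' fun u => imp_congr_right fun _ => ih _

theorem edgesAll_congr (es : List (Edge Λ)) {k k' : (ℕ → F.W) → Prop} (h : ∀ g, k g ↔ k' g)
    (g : ℕ → F.W) : edgesAll F es k g ↔ edgesAll F es k' g := by
  induction es generalizing g with
  | nil => exact h g
  | cons e es ih => exact forall_congr' fun u => imp_congr_right fun _ => ih _

theorem edgesAll_forall {ι : Sort*} (es : List (Edge Λ)) (k : ι → (ℕ → F.W) → Prop)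
    (g : ℕ → F.W) : edgesAll F es (fun g' => ∀ i, k i g') g ↔ ∀ i, edgesAll F es (k i) g := by
  induction es generalizing g with
  | nil => rfl
  | cons e es ih =>
    simp only [edgesAll, ih]
    exact ⟨fun h i u hu => h u hu i, fun h u hu i => h i u hu⟩

theorem edgesAll_or_right (es : List (Edge Λ)) {k Q : (ℕ → F.W) → Prop}
    (hQ : ∀ g y u, y ∈ bvars es → (Q (update g y u) ↔ Q g)) (g : ℕ → F.W) :
    edgesAll F es (fun g' => k g' ∨ Q g') g ↔ edgesAll F es k g ∨ Q g := by
  induction es generalizing g with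
  | nil => rfl
  | cons e es ih =>
    obtain ⟨y, l, x⟩ := e
    have ih' := fun g => ih (fun g y' u hy' => hQ g y' u (by simp [hy'])) g
    have hQy := fun u => hQ g y u (by simp)
    simp only [edgesAll, ih', hQy]
    by_cases hg : Q g <;> simp [hg]

namespace Clause

def Sem (F : Frame Λ) (L : List (LExp Λ)) (C : Clause Λ) (g : ℕ → F.W) : Prop :=
  edgesAll F C.edges (fun g' => ∃ p ∈ C.lits, LitSem F L g' p) g

def OK (L : List (LExp Λ)) (U : Set ℕ) (C : Clause Λ) : Prop :=
  EdgesOK U C.edges ∧ ∀ p ∈ C.lits, LitOK L (U ∪ bvars C.edges) (U ∪ bvars C.edges) p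

def merge (C C' : Clause Λ) : Clause Λ := ⟨C.edges ++ C'.edges, C.lits ++ C'.lits⟩

theorem OK.sem_congr {U : Set ℕ} {C : Clause Λ} (hC : C.OK L U) {g g' : ℕ → F.W}
    (hg : ∀ v ∈ U, g v = g' v) : C.Sem F L g ↔ C.Sem F L g' := by
  obtain ⟨es, lits⟩ := C
  obtain ⟨hes, hlits⟩ := hC
  induction es generalizing U g g' with
  | nil =>
    simp only [bvars_nil, Set.union_empty] at hlits
    exact exists_congr fun p => and_congr_right fun hp => (hlits p hp).litSem_congr hg
  | cons e es ih =>
    obtain ⟨y, l, x⟩ := e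
    obtain ⟨hx, hy, hes⟩ := hes
    refine forall_congr' fun u => ?_
    rw [hg x hx]
    refine imp_congr_right fun _ =>
      ih (fun v hv => ?_) hes (by simpa [Set.insert_union] using hlits)
    rcases hv with rfl | hv
    · simp
    · simp [ne_of_mem_of_not_mem hv hy, hg v hv]

theorem sem_merge {U : Set ℕ} {C C' : Clause Λ} (hC : C.OK L U) (hC' : C'.OK L U)
    (hd : Disjoint (bvars C.edges) (bvars C'.edges)) (g : ℕ → F.W) :
    (C.merge C').Sem F L g ↔ C.Sem F L g ∨ C'.Sem F L g := by
  have inner : ∀ g', edgesAll F C'.edges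
      (fun g'' => ∃ p ∈ C.lits ++ C'.lits, LitSem F L g'' p) g' ↔
      C'.Sem F L g' ∨ ∃ p ∈ C.lits, LitSem F L g' p := by
    intro g'
    rw [Sem]
    refine (edgesAll_congr _ (fun g'' => ?_) g').trans
      (edgesAll_or_right (k := fun g'' => ∃ p ∈ C'.lits, LitSem F L g'' p)
        (Q := fun g'' => ∃ p ∈ C.lits, LitSem F L g'' p) _ ?_ g')
    · simp only [List.mem_append, or_and_right, exists_or]; exact or_comm
    · intro g'' y u hy
      refine exists_congr fun p => and_congr_right fun hp =>
        (hC.2 p hp).litSem_congr fun v hv => ?_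
      have hvy : v ≠ y := by
        rintro rfl
        rcases hv with hv | hv
        exacts [hC'.1.not_mem hy hv, hd.ne_of_mem hv hy rfl]
      exact update_of_ne hvy u g''
  rw [Sem, merge, edgesAll_append, edgesAll_congr _ inner]
  refine (edgesAll_congr _ (fun _ => or_comm) g).trans (edgesAll_or_right _ ?_ g)
  exact fun g' y u hy => hC'.sem_congr fun v hv =>
    update_of_ne (ne_of_mem_of_not_mem hv (hC.1.not_mem hy)) u g'

end Clause

/-- Hangs `◇_l (nm y)` below the node formula of `x`, for every edge `(y, l, x)`. -/
def treeFormula (nm : ℕ → MF Λ (ℕ × ℕ)) : List (Edge Λ) → ℕ → MF Λ (ℕ × ℕ)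
  | [], v => nm v
  | (y, l, x) :: es, v =>
      if v = x then .and (treeFormula nm es x) (.dia l (treeFormula nm es y))
      else treeFormula nm es v

theorem gsAnt_treeFormula {nm : ℕ → MF Λ (ℕ × ℕ)} (h : ∀ v, GSAnt (nm v)) :
    ∀ (es : List (Edge Λ)) (v : ℕ), GSAnt (treeFormula nm es v)
  | [], v => h v
  | (y, l, x) :: es, v => by
    unfold treeFormula
    split
    · exact .and (gsAnt_treeFormula h es x) (.dia l (gsAnt_treeFormula h es y))
    · exact gsAnt_treeFormula h es v

theorem forall_sat_treeFormula_cons_iff {U : Set ℕ} {y x : ℕ} (hx : x ∈ U) (hy : y ∉ U)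
    (l : Λ) (es : List (Edge Λ)) (nm : ℕ → MF Λ (ℕ × ℕ)) (θ : ℕ × ℕ → Set F.W) (g : ℕ → F.W) :
    (∀ v ∈ U, sat F θ (g v) (treeFormula nm ((y, l, x) :: es) v)) ↔
      ∃ u, F.R l (g x) u ∧ ∀ v ∈ insert y U, sat F θ (update g y u v) (treeFormula nm es v) := by
  simp only [treeFormula, Set.forall_mem_insert, update_self]
  constructor
  · intro h
    have hx' := h x hx
    rw [if_pos rfl] at hx'
    obtain ⟨hTx, u, hu, hTy⟩ := hx'
    refine ⟨u, hu, hTy, fun v hv => ?_⟩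
    rw [update_of_ne (ne_of_mem_of_not_mem hv hy)]
    by_cases hvx : v = x
    · exact hvx ▸ hTx
    · simpa [hvx] using h v hv
  · rintro ⟨u, hu, hTy, hT⟩ v hv
    have hTv := hT v hv
    rw [update_of_ne (ne_of_mem_of_not_mem hv hy)] at hTv
    split
    · next hvx =>
      subst hvx
      exact ⟨hTv, u, hu, hTy⟩
    · exact hTv

theorem not_sat_treeFormula_iff {U : Set ℕ} {es : List (Edge Λ)} (hes : EdgesOK U es)
    (nm : ℕ → MF Λ (ℕ × ℕ)) (θ : ℕ × ℕ → Set F.W) (g : ℕ → F.W) :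
    (¬ ∀ v ∈ U, sat F θ (g v) (treeFormula nm es v)) ↔
      edgesAll F es (fun g' => ¬ ∀ v ∈ U ∪ bvars es, sat F θ (g' v) (nm v)) g := by
  induction es generalizing U g with
  | nil => simp [treeFormula, edgesAll]
  | cons e es ih =>
    obtain ⟨y, l, x⟩ := e
    obtain ⟨hx, hy, hes⟩ := hes
    simp only [forall_sat_treeFormula_cons_iff hx hy, edgesAll, not_exists, not_and]
    refine forall_congr' fun u => imp_congr_right fun _ => ?_
    rw [ih hes]
    simp only [bvars_cons, Set.union_insert, Set.insert_union]

/-- Empty conjunctions are `¬⊥`, since `⊤` is not a generalized Sahlqvist antecedent. -/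
noncomputable def nodeFormula (L : List (LExp Λ)) (V : Set ℕ) (lits : List (Lit Λ)) (v : ℕ) :
    MF Λ (ℕ × ℕ) :=
  .and (((L.filter fun E => Safe E ∧ E.evars ⊆ V ∧ safeRoot E = v).map
          fun E => defFormula (varOf L) E (.var (varOf L E))).foldr .and (.neg .bot))
    (((lits.filter fun p => p.1 = v).map fun p => .neg p.2).foldr .and (.neg .bot))

theorem sat_nodeFormula_iff {V : Set ℕ} {lits : List (Lit Λ)} {θ : ℕ × ℕ → Set F.W}
    {x : F.W} {v : ℕ} :
    sat F θ x (nodeFormula L V lits v) ↔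
      (∀ E ∈ L, Safe E → E.evars ⊆ V → safeRoot E = v →
        sat F θ x (defFormula (varOf L) E (.var (varOf L E)))) ∧
      ∀ p ∈ lits, p.1 = v → ¬ sat F θ x p.2 := by
  simp only [nodeFormula, sat, sat_foldr_and, List.forall_mem_map, List.mem_filter,
    decide_eq_true_eq, and_imp, not_false_eq_true, and_true]

theorem gsAnt_nodeFormula {V : Set ℕ} {lits : List (Lit Λ)} (hlits : ∀ p ∈ lits, Positive p.2)
    (v : ℕ) : GSAnt (nodeFormula L V lits v) := by
  refine .and (.foldr_and (.neg .bot) ?_) (.foldr_and (.neg .bot) ?_) <;>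
    simp only [List.mem_map, List.mem_filter, decide_eq_true_eq] <;>
    rintro _ ⟨a, ⟨ha, h⟩, rfl⟩
  · exact .reg (defFormula_regular h.1.1 (.var _) le_rfl)
  · exact .neg (hlits a ha)

/-- `⇒`: otherwise `denVal` satisfies all node formulas. `⇐`: a valuation satisfying the defining
formulas dominates `denVal`, so it satisfies the true literal, whose negation it also satisfies. -/
theorem forall_not_sat_nodeFormula_iff (hcl : SubClosed L) {V : Set ℕ} {lits : List (Lit Λ)}
    (hlits : ∀ p ∈ lits, LitOK L V V p) (g : ℕ → F.W) :
    (∀ θ, ¬ ∀ v ∈ V, sat F θ (g v) (nodeFormula L V lits v)) ↔ ∃ p ∈ lits, LitSem F L g p := by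
  constructor
  · intro h
    by_contra! hlit
    refine h (denVal F L g) fun v _ => sat_nodeFormula_iff.2 ⟨?_, fun p hp hpv => ?_⟩
    · rintro E hEL hE - rfl
      exact sat_defFormula_denVal hcl hE hEL g
    · exact hpv ▸ hlit p hp
  · rintro ⟨p, hp, hpsat⟩ θ hθ
    have hmin := den_subset_of_sat_defFormula (D := {E | E ∈ L ∧ Safe E ∧ E.evars ⊆ V}) hcl
      (fun E hE => ⟨hE.1, hE.2.1⟩)
      (fun E hE E' hE' hs => ⟨hcl E hE.1 E' hE', hs, hE'.evars_subset.trans hE.2.2⟩)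
      (fun E ⟨hEL, hE, hEV⟩ => (sat_nodeFormula_iff.1 (hθ _ (hEV (safeRoot_mem_evars hE.1)))).1
        E hEL hE hEV rfl)
    obtain ⟨hpV, hpos⟩ := hlits p hp
    exact (sat_nodeFormula_iff.1 (hθ p.1 hpV)).2 p hp rfl
      (hpos.sat_of_sat_denVal (fun E hEL hE hEV => hmin E ⟨hEL, hE, hEV⟩) hpsat)

noncomputable def clauseAntecedent (L : List (LExp Λ)) (x₀ : ℕ) (C : Clause Λ) :
    MF Λ (ℕ × ℕ) :=
  treeFormula (nodeFormula L ({x₀} ∪ bvars C.edges) C.lits) C.edges x₀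

theorem gsAnt_clauseAntecedent {x₀ : ℕ} {C : Clause Λ} (hC : ∀ p ∈ C.lits, Positive p.2) :
    GSAnt (clauseAntecedent L x₀ C) :=
  gsAnt_treeFormula (gsAnt_nodeFormula hC) _ _

theorem forall_sat_clauseAntecedent_imp_bot_iff (hcl : SubClosed L) {x₀ : ℕ} {C : Clause Λ}
    (hC : C.OK L {x₀}) (g : ℕ → F.W) :
    (∀ θ, sat F θ (g x₀) (.imp (clauseAntecedent L x₀ C) .bot)) ↔ C.Sem F L g := by
  have h := fun θ => not_sat_treeFormula_iff hC.1
    (nodeFormula L ({x₀} ∪ bvars C.edges) C.lits) θ g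
  simp only [Set.mem_singleton_iff, forall_eq] at h
  simp only [sat, clauseAntecedent, imp_false, h]
  rw [← edgesAll_forall]
  exact edgesAll_congr _ (forall_not_sat_nodeFormula_iff hcl hC.2) g

inductive LitComb (Λ : Type u) : Type u
  | lit : Lit Λ → LitComb Λ
  | and : LitComb Λ → LitComb Λ → LitComb Λ
  | or : LitComb Λ → LitComb Λ → LitComb Λ

namespace LitComb

def Sem (F : Frame Λ) (L : List (LExp Λ)) (g : ℕ → F.W) : LitComb Λ → Prop
  | lit p => LitSem F L g p
  | and a b => a.Sem F L g ∧ b.Sem F L g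
  | or a b => a.Sem F L g ∨ b.Sem F L g

def lits : LitComb Λ → List (Lit Λ)
  | lit p => [p]
  | and a b | or a b => a.lits ++ b.lits

def dnf : LitComb Λ → List (List (Lit Λ))
  | lit p => [[p]]
  | and a b => a.dnf.flatMap fun d => b.dnf.map (d ++ ·)
  | or a b => a.dnf ++ b.dnf

def cnf : LitComb Λ → List (List (Lit Λ))
  | lit p => [[p]]
  | and a b => a.cnf ++ b.cnf
  | or a b => a.cnf.flatMap fun d => b.cnf.map (d ++ ·)

theorem sem_iff_dnf {g : ℕ → F.W} (c : LitComb Λ) :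
    c.Sem F L g ↔ ∃ d ∈ c.dnf, ∀ p ∈ d, LitSem F L g p := by
  induction c with
  | lit p => simp only [Sem, dnf, List.mem_singleton, exists_eq_left, forall_eq]
  | and a b iha ihb =>
    simp only [Sem, dnf, iha, ihb, List.mem_flatMap, List.mem_map]
    constructor
    · rintro ⟨⟨d, hd, hda⟩, ⟨d', hd', hdb⟩⟩
      exact ⟨d ++ d', ⟨d, hd, d', hd', rfl⟩,
        fun p hp => (List.mem_append.1 hp).elim (hda p) (hdb p)⟩
    · rintro ⟨_, ⟨d, hd, d', hd', rfl⟩, h⟩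
      exact ⟨⟨d, hd, fun p hp => h p (List.mem_append.2 (.inl hp))⟩,
        ⟨d', hd', fun p hp => h p (List.mem_append.2 (.inr hp))⟩⟩
  | or a b iha ihb => simp only [Sem, dnf, iha, ihb, List.mem_append, or_and_right, exists_or]

theorem sem_iff_cnf {g : ℕ → F.W} (c : LitComb Λ) :
    c.Sem F L g ↔ ∀ d ∈ c.cnf, ∃ p ∈ d, LitSem F L g p := by
  induction c with
  | lit p => simp only [Sem, cnf, List.mem_singleton, exists_eq_left, forall_eq]
  | and a b iha ihb => simp only [Sem, cnf, iha, ihb, List.mem_append, or_imp, forall_and]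
  | or a b iha ihb =>
    simp only [Sem, cnf, iha, ihb, or_forall_mem_iff, List.forall_mem_flatMap, List.forall_mem_map,
      List.mem_append, or_and_right, exists_or]

theorem mem_lits_of_mem_dnf {c : LitComb Λ} {d : List (Lit Λ)} (hd : d ∈ c.dnf) {p : Lit Λ}
    (hp : p ∈ d) : p ∈ c.lits := by
  induction c generalizing d with
  | lit q => simp_all [dnf, lits]
  | and a b iha ihb =>
    simp only [dnf, List.mem_flatMap, List.mem_map] at hd
    obtain ⟨d, hd, d', hd', rfl⟩ := hd
    exact (List.mem_append.1 hp).elim (fun h => List.mem_append.2 (.inl (iha hd h)))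
      fun h => List.mem_append.2 (.inr (ihb hd' h))
  | or a b iha ihb =>
    exact (List.mem_append.1 hd).elim (fun h => List.mem_append.2 (.inl (iha h hp)))
      fun h => List.mem_append.2 (.inr (ihb h hp))

theorem mem_lits_of_mem_cnf {c : LitComb Λ} {d : List (Lit Λ)} (hd : d ∈ c.cnf) {p : Lit Λ}
    (hp : p ∈ d) : p ∈ c.lits := by
  induction c generalizing d with
  | lit q => simp_all [cnf, lits]
  | and a b iha ihb =>
    exact (List.mem_append.1 hd).elim (fun h => List.mem_append.2 (.inl (iha h hp)))
      fun h => List.mem_append.2 (.inr (ihb h hp))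
  | or a b iha ihb =>
    simp only [cnf, List.mem_flatMap, List.mem_map] at hd
    obtain ⟨d, hd, d', hd', rfl⟩ := hd
    exact (List.mem_append.1 hp).elim (fun h => List.mem_append.2 (.inl (iha hd h)))
      fun h => List.mem_append.2 (.inr (ihb hd' h))

-- The unit literals of `bigAnd` and `bigOr` sit at a variable `x` already in scope.
def bigAnd (x : ℕ) (cs : List (LitComb Λ)) : LitComb Λ := cs.foldr .and (.lit (x, .top))

def bigOr (x : ℕ) (cs : List (LitComb Λ)) : LitComb Λ := cs.foldr .or (.lit (x, .bot))

theorem sem_bigAnd {g : ℕ → F.W} (x : ℕ) (cs : List (LitComb Λ)) :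
    (bigAnd x cs).Sem F L g ↔ ∀ c ∈ cs, c.Sem F L g := by
  induction cs <;> simp_all [bigAnd, Sem, LitSem, sat]

theorem sem_bigOr {g : ℕ → F.W} (x : ℕ) (cs : List (LitComb Λ)) :
    (bigOr x cs).Sem F L g ↔ ∃ c ∈ cs, c.Sem F L g := by
  induction cs <;> simp_all [bigOr, Sem, LitSem, sat]

theorem mem_lits_bigAnd {x : ℕ} {cs : List (LitComb Λ)} {p : Lit Λ} (hp : p ∈ (bigAnd x cs).lits) :
    p = (x, .top) ∨ ∃ c ∈ cs, p ∈ c.lits := by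
  induction cs <;> simp_all [bigAnd, lits]; grind

theorem mem_lits_bigOr {x : ℕ} {cs : List (LitComb Λ)} {p : Lit Λ} (hp : p ∈ (bigOr x cs).lits) :
    p = (x, .bot) ∨ ∃ c ∈ cs, p ∈ c.lits := by
  induction cs <;> simp_all [bigOr, lits]; grind

end LitComb

open LitComb

theorem forall_litSem_update_iff {U S : Set ℕ} {d : List (Lit Λ)}
    (hd : ∀ p ∈ d, LitOK L U S p) {y : ℕ} (hy : y ∉ U) (g : ℕ → F.W) (u : F.W) :
    (∀ p ∈ d, LitSem F L (update g y u) p) ↔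
      (∀ p ∈ d, p.1 = y → sat F (denVal F L g) u p.2) ∧ ∀ p ∈ d, p.1 ≠ y → LitSem F L g p := by
  have h := fun p hp => (hd p hp).litSem_update_iff hy g u
  constructor
  · intro hall
    exact ⟨fun p hp hpy => by simpa [hpy] using (h p hp).1 (hall p hp),
      fun p hp hpy => by simpa [hpy] using (h p hp).1 (hall p hp)⟩
  · rintro ⟨h₁, h₂⟩ p hp
    rw [h p hp]
    split
    exacts [h₁ p hp ‹_›, h₂ p hp ‹_›]

theorem exists_litSem_update_iff {U S : Set ℕ} {d : List (Lit Λ)}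
    (hd : ∀ p ∈ d, LitOK L U S p) {y : ℕ} (hy : y ∉ U) (g : ℕ → F.W) (u : F.W) :
    (∃ p ∈ d, LitSem F L (update g y u) p) ↔
      (∃ p ∈ d, p.1 = y ∧ sat F (denVal F L g) u p.2) ∨ ∃ p ∈ d, p.1 ≠ y ∧ LitSem F L g p := by
  have h := fun p hp => (hd p hp).litSem_update_iff hy g u
  constructor
  · rintro ⟨p, hp, hps⟩
    rw [h p hp] at hps
    split at hps
    exacts [.inl ⟨p, hp, ‹_›, hps⟩, .inr ⟨p, hp, ‹_›, hps⟩]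
  · rintro (⟨p, hp, hpy, hps⟩ | ⟨p, hp, hpy, hps⟩) <;> refine ⟨p, hp, (h p hp).2 ?_⟩
    · simpa [hpy] using hps
    · simpa [hpy] using hps

/-- `(∃ y ◁_l x) c` without `y`: in each disjunct of the DNF of `c`, the literals at `y` are
merged into the single literal `(x, ◇_l ⋀ …)`. -/
noncomputable def wrapEx (y : ℕ) (l : Λ) (x : ℕ) (c : LitComb Λ) : LitComb Λ :=
  bigOr x (c.dnf.map fun d => bigAnd x
    (.lit (x, .dia l (((d.filter (·.1 = y)).map Prod.snd).foldr .and .top)) ::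
      (d.filter (·.1 ≠ y)).map .lit))

/-- `(∀ y ◁_l x) c` without `y`: in each conjunct of the CNF of `c`, the literals at `y` are
merged into the single literal `(x, □_l ⋁ …)`. -/
noncomputable def wrapAll (y : ℕ) (l : Λ) (x : ℕ) (c : LitComb Λ) : LitComb Λ :=
  bigAnd x (c.cnf.map fun d => bigOr x
    (.lit (x, .box l (((d.filter (·.1 = y)).map Prod.snd).foldr .or .bot)) ::
      (d.filter (·.1 ≠ y)).map .lit))

theorem litSem_dia_iff {g : ℕ → F.W} {x y : ℕ} {l : Λ} {d : List (Lit Λ)} :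
    LitSem F L g (x, .dia l (((d.filter (·.1 = y)).map Prod.snd).foldr .and .top)) ↔
      ∃ u, F.R l (g x) u ∧ ∀ p ∈ d, p.1 = y → sat F (denVal F L g) u p.2 := by
  simp only [LitSem, sat, sat_foldr_and, List.forall_mem_map, List.forall_mem_filter,
    decide_eq_true_eq, and_true]

theorem litSem_box_iff {g : ℕ → F.W} {x y : ℕ} {l : Λ} {d : List (Lit Λ)} :
    LitSem F L g (x, .box l (((d.filter (·.1 = y)).map Prod.snd).foldr .or .bot)) ↔
      ∀ u, F.R l (g x) u → ∃ p ∈ d, p.1 = y ∧ sat F (denVal F L g) u p.2 := by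
  simp only [LitSem, sat, sat_foldr_or, List.mem_map, List.mem_filter, decide_eq_true_eq,
    exists_exists_and_eq_and, or_false]
  simp only [and_assoc]

theorem sem_wrapEx {U S : Set ℕ} {c : LitComb Λ} (hc : ∀ p ∈ c.lits, LitOK L U S p) {y : ℕ}
    (hy : y ∉ U) (l : Λ) (x : ℕ) (g : ℕ → F.W) :
    (wrapEx y l x c).Sem F L g ↔ ∃ u, F.R l (g x) u ∧ c.Sem F L (update g y u) := by
  simp only [wrapEx, sem_bigOr, List.mem_map, exists_exists_and_eq_and]
  simp only [sem_bigAnd, List.forall_mem_cons, List.forall_mem_map, List.forall_mem_filter,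
    decide_eq_true_eq, Sem, litSem_dia_iff, c.sem_iff_dnf]
  constructor
  · rintro ⟨d, hd, ⟨u, hu, h₁⟩, h₂⟩
    exact ⟨u, hu, d, hd, (forall_litSem_update_iff (fun p hp => hc p (mem_lits_of_mem_dnf hd hp))
      hy g u).2 ⟨h₁, h₂⟩⟩
  · rintro ⟨u, hu, d, hd, hall⟩
    obtain ⟨h₁, h₂⟩ := (forall_litSem_update_iff (fun p hp => hc p (mem_lits_of_mem_dnf hd hp))
      hy g u).1 hall
    exact ⟨d, hd, ⟨u, hu, h₁⟩, h₂⟩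

theorem sem_wrapAll {U S : Set ℕ} {c : LitComb Λ} (hc : ∀ p ∈ c.lits, LitOK L U S p) {y : ℕ}
    (hy : y ∉ U) (l : Λ) (x : ℕ) (g : ℕ → F.W) :
    (wrapAll y l x c).Sem F L g ↔ ∀ u, F.R l (g x) u → c.Sem F L (update g y u) := by
  have conjunct : ∀ d : List (Lit Λ), (bigOr x
      (.lit (x, .box l (((d.filter (·.1 = y)).map Prod.snd).foldr .or .bot)) ::
        (d.filter (·.1 ≠ y)).map .lit)).Sem F L g ↔
      (∀ u, F.R l (g x) u → ∃ p ∈ d, p.1 = y ∧ sat F (denVal F L g) u p.2) ∨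
        ∃ p ∈ d, p.1 ≠ y ∧ LitSem F L g p := by
    intro d
    simp only [sem_bigOr, List.mem_cons, or_and_right, exists_or, exists_eq_left, Sem,
      litSem_box_iff, List.mem_map, List.mem_filter, decide_eq_true_eq, exists_exists_and_eq_and]
    simp only [and_assoc]
  simp only [wrapAll, sem_bigAnd, List.forall_mem_map, conjunct, c.sem_iff_cnf]
  constructor
  · intro h u hu d hd
    refine (exists_litSem_update_iff (fun p hp => hc p (mem_lits_of_mem_cnf hd hp)) hy g u).2 ?_
    exact (h d hd).imp_left fun h' => h' u hu
  · intro h d hd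
    by_cases hrest : ∃ p ∈ d, p.1 ≠ y ∧ LitSem F L g p
    · exact .inr hrest
    · exact .inl fun u hu => ((exists_litSem_update_iff
        (fun p hp => hc p (mem_lits_of_mem_cnf hd hp)) hy g u).1 (h u hu d hd)).resolve_right hrest

theorem forall_posOver_filter_eq {U S : Set ℕ} {d : List (Lit Λ)} (hd : ∀ p ∈ d, LitOK L U S p)
    (y : ℕ) : ∀ φ ∈ (d.filter (·.1 = y)).map Prod.snd, PosOver L U φ := by
  simp only [List.mem_map, List.mem_filter]
  rintro _ ⟨p, ⟨hp, -⟩, rfl⟩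
  exact (hd p hp).2

theorem litOK_of_mem_map_lit_filter {U S : Set ℕ} {d : List (Lit Λ)}
    (hd : ∀ p ∈ d, LitOK L U S p) (y x : ℕ) :
    ∀ c ∈ (d.filter (·.1 ≠ y)).map LitComb.lit, ∀ p ∈ c.lits, LitOK L U (insert x (S \ {y})) p := by
  simp only [List.mem_map, List.mem_filter, decide_eq_true_eq]
  rintro _ ⟨q, ⟨hq, hqy⟩, rfl⟩ p hp
  rw [lits, List.mem_singleton] at hp
  subst hp
  exact ⟨.inr ⟨(hd p hq).1, hqy⟩, (hd p hq).2⟩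

theorem litOK_of_mem_lits_wrapEx {U S : Set ℕ} {c : LitComb Λ}
    (hc : ∀ p ∈ c.lits, LitOK L U S p) {y : ℕ} {l : Λ} {x : ℕ} {p : Lit Λ}
    (hp : p ∈ (wrapEx y l x c).lits) : LitOK L U (insert x (S \ {y})) p := by
  rcases mem_lits_bigOr hp with rfl | ⟨_, hc', hp⟩
  · exact ⟨.inl rfl, .bot⟩
  obtain ⟨d, hd, rfl⟩ := List.mem_map.1 hc'
  have hd' := fun p hp => hc p (mem_lits_of_mem_dnf hd hp)
  rcases mem_lits_bigAnd hp with rfl | ⟨c', hc', hp⟩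
  · exact ⟨.inl rfl, .top⟩
  rcases List.mem_cons.1 hc' with rfl | hc'
  · rw [lits, List.mem_singleton] at hp
    exact hp ▸ ⟨.inl rfl, .dia l (.foldr .and .top (forall_posOver_filter_eq hd' y))⟩
  · exact litOK_of_mem_map_lit_filter hd' y x c' hc' p hp

theorem litOK_of_mem_lits_wrapAll {U S : Set ℕ} {c : LitComb Λ}
    (hc : ∀ p ∈ c.lits, LitOK L U S p) {y : ℕ} {l : Λ} {x : ℕ} {p : Lit Λ}
    (hp : p ∈ (wrapAll y l x c).lits) : LitOK L U (insert x (S \ {y})) p := by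
  rcases mem_lits_bigAnd hp with rfl | ⟨_, hc', hp⟩
  · exact ⟨.inl rfl, .top⟩
  obtain ⟨d, hd, rfl⟩ := List.mem_map.1 hc'
  have hd' := fun p hp => hc p (mem_lits_of_mem_cnf hd hp)
  rcases mem_lits_bigOr hp with rfl | ⟨c', hc', hp⟩
  · exact ⟨.inl rfl, .bot⟩
  rcases List.mem_cons.1 hc' with rfl | hc'
  · rw [lits, List.mem_singleton] at hp
    exact hp ▸ ⟨.inl rfl, .box l (.foldr .or .bot (forall_posOver_filter_eq hd' y))⟩
  · exact litOK_of_mem_map_lit_filter hd' y x c' hc' p hp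

/-- Well-formedness below an existential quantifier, `U` being the inherently universal
variables. -/
def InnerOK (L : List (LExp Λ)) (U : Set ℕ) : KrF Λ → Prop
  | .atom _ E => E ∈ L ∧ Safe E ∧ E.evars ⊆ U
  | .and a b | .or a b => InnerOK L U a ∧ InnerOK L U b
  | .all y _ _ β | .ex y _ _ β => y ∉ U ∧ InnerOK L U β

noncomputable def innerTrans (L : List (LExp Λ)) : KrF Λ → LitComb Λ
  | .atom s E => .lit (s, .var (varOf L E))
  | .and a b => .and (innerTrans L a) (innerTrans L b)
  | .or a b => .or (innerTrans L a) (innerTrans L b)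
  | .all y l x β => wrapAll y l x (innerTrans L β)
  | .ex y l x β => wrapEx y l x (innerTrans L β)

theorem litOK_of_mem_lits_innerTrans {U : Set ℕ} {β : KrF Λ} (h : InnerOK L U β) :
    ∀ p ∈ (innerTrans L β).lits, LitOK L U β.fv p := by
  induction β with
  | atom s E =>
    intro p hp
    rw [innerTrans, lits, List.mem_singleton] at hp
    exact hp ▸ ⟨.inl rfl, .var h.1 h.2.1 h.2.2⟩
  | and a b iha ihb | or a b iha ihb =>
    intro p hp
    rcases List.mem_append.1 hp with hp | hp
    · exact (iha h.1 p hp).mono le_rfl Set.subset_union_left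
    · exact (ihb h.2 p hp).mono le_rfl Set.subset_union_right
  | all y l x β ih => exact fun p hp => litOK_of_mem_lits_wrapAll (ih h.2) hp
  | ex y l x β ih => exact fun p hp => litOK_of_mem_lits_wrapEx (ih h.2) hp

theorem sem_innerTrans {U : Set ℕ} {β : KrF Λ} (h : InnerOK L U β) (g : ℕ → F.W) :
    (innerTrans L β).Sem F L g ↔ β.holds F g := by
  induction β generalizing g with
  | atom s E => exact iff_of_eq (congrArg (g s ∈ ·) (denVal_varOf h.1 g))
  | and a b iha ihb => exact and_congr (iha h.1 g) (ihb h.2 g)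
  | or a b iha ihb => exact or_congr (iha h.1 g) (ihb h.2 g)
  | all y l x β ih =>
    rw [innerTrans, sem_wrapAll (litOK_of_mem_lits_innerTrans h.2) h.1]
    exact forall₂_congr fun u _ => ih h.2 _
  | ex y l x β ih =>
    rw [innerTrans, sem_wrapEx (litOK_of_mem_lits_innerTrans h.2) h.1]
    exact exists_congr fun u => and_congr_right fun _ => ih h.2 _

/-- Well-formedness outside the existential quantifiers, `U` being the variables bound so far. -/
def OuterOK (L : List (LExp Λ)) : Set ℕ → KrF Λ → Prop
  | U, .atom s E => s ∈ U ∧ E ∈ L ∧ Safe E ∧ E.evars ⊆ U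
  | U, .and a b => OuterOK L U a ∧ OuterOK L U b
  | U, .or a b => OuterOK L U a ∧ OuterOK L U b ∧ Disjoint a.bv b.bv
  | U, .all y _ x β => x ∈ U ∧ y ∉ U ∧ OuterOK L (insert y U) β
  | U, .ex y l x β => (KrF.ex y l x β).fv ⊆ U ∧ y ∉ U ∧ InnerOK L U β

noncomputable def outerTrans (L : List (LExp Λ)) : KrF Λ → List (Clause Λ)
  | .atom s E => [⟨[], [(s, .var (varOf L E))]⟩]
  | .and a b => outerTrans L a ++ outerTrans L b
  | .or a b => (outerTrans L a).flatMap fun C => (outerTrans L b).map C.merge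
  | .all y l x β => (outerTrans L β).map fun C => ⟨(y, l, x) :: C.edges, C.lits⟩
  | .ex y l x β => (wrapEx y l x (innerTrans L β)).cnf.map fun d => ⟨[], d⟩

theorem ok_of_mem_outerTrans {U : Set ℕ} {β : KrF Λ} (h : OuterOK L U β) :
    ∀ C ∈ outerTrans L β, C.OK L U ∧ bvars C.edges ⊆ β.bv := by
  induction β generalizing U with
  | atom s E =>
    simp only [outerTrans, List.mem_singleton, forall_eq, bvars_nil, Set.empty_subset, and_true]
    refine ⟨trivial, fun p hp => ?_⟩
    rw [List.mem_singleton] at hp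
    subst hp
    exact ⟨.inl h.1, .var h.2.1 h.2.2.1 (h.2.2.2.trans Set.subset_union_left)⟩
  | and a b iha ihb =>
    intro C hC
    rcases List.mem_append.1 hC with hC | hC
    · exact (iha h.1 C hC).imp_right fun h => h.trans Set.subset_union_left
    · exact (ihb h.2 C hC).imp_right fun h => h.trans Set.subset_union_right
  | or a b iha ihb =>
    simp only [outerTrans, List.mem_flatMap, List.mem_map]
    rintro _ ⟨C, hC, C', hC', rfl⟩
    obtain ⟨⟨hCe, hCl⟩, hCb⟩ := iha h.1 C hC
    obtain ⟨⟨hC'e, hC'l⟩, hC'b⟩ := ihb h.2.1 C' hC'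
    simp only [Clause.OK, Clause.merge, bvars_append, List.mem_append]
    refine ⟨⟨hCe.append hC'e (h.2.2.mono hCb hC'b), ?_⟩, Set.union_subset_union hCb hC'b⟩
    rintro p (hp | hp)
    · exact (hCl p hp).mono (Set.union_subset_union_right U Set.subset_union_left)
        (Set.union_subset_union_right U Set.subset_union_left)
    · exact (hC'l p hp).mono (Set.union_subset_union_right U Set.subset_union_right)
        (Set.union_subset_union_right U Set.subset_union_right)
  | all y l x β ih =>
    simp only [outerTrans, List.mem_map]
    rintro _ ⟨C, hC, rfl⟩
    obtain ⟨⟨hCe, hCl⟩, hCb⟩ := ih h.2.2 C hC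
    refine ⟨⟨⟨h.1, h.2.1, hCe⟩, ?_⟩, ?_⟩
    · simpa [Set.insert_union] using hCl
    · simpa [KrF.bv] using Set.insert_subset_insert hCb
  | ex y l x β =>
    simp only [outerTrans, List.mem_map]
    rintro _ ⟨d, hd, rfl⟩
    refine ⟨⟨trivial, fun p hp => ?_⟩, by simp⟩
    have hp' := litOK_of_mem_lits_wrapEx (litOK_of_mem_lits_innerTrans h.2.2)
      (mem_lits_of_mem_cnf hd hp)
    exact hp'.mono (by simp) fun z hz => .inl (h.1 hz)

theorem holds_iff_forall_mem_outerTrans {U : Set ℕ} {β : KrF Λ} (h : OuterOK L U β)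
    (g : ℕ → F.W) : β.holds F g ↔ ∀ C ∈ outerTrans L β, C.Sem F L g := by
  induction β generalizing U g with
  | atom s E =>
    simp only [outerTrans, List.mem_singleton, forall_eq, Clause.Sem, edgesAll, exists_eq_left,
      LitSem, KrF.holds, sat, denVal_varOf h.2.1]
  | and a b iha ihb =>
    simp only [KrF.holds, outerTrans, List.forall_mem_append, iha h.1, ihb h.2]
  | or a b iha ihb =>
    simp only [KrF.holds, outerTrans, iha h.1, ihb h.2.1, or_forall_mem_iff,
      List.forall_mem_flatMap, List.forall_mem_map]
    refine forall₂_congr fun C hC => forall₂_congr fun C' hC' => ?_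
    obtain ⟨hCok, hCb⟩ := ok_of_mem_outerTrans h.1 C hC
    obtain ⟨hC'ok, hC'b⟩ := ok_of_mem_outerTrans h.2.1 C' hC'
    exact (Clause.sem_merge hCok hC'ok (h.2.2.mono hCb hC'b) g).symm
  | all y l x β ih =>
    simp only [KrF.holds, outerTrans, List.forall_mem_map, ih h.2.2]
    exact ⟨fun h C hC u hu => h u hu C hC, fun h u hu C hC => h C hC u hu⟩
  | ex y l x β =>
    calc (KrF.ex y l x β).holds F g ↔ (wrapEx y l x (innerTrans L β)).Sem F L g := by
          rw [sem_wrapEx (litOK_of_mem_lits_innerTrans h.2.2) h.2.1]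
          exact exists_congr fun u => and_congr_right fun _ => (sem_innerTrans h.2.2 _).symm
      _ ↔ _ := by
          rw [sem_iff_cnf]
          simp only [outerTrans, List.forall_mem_map]
          rfl

def atomExprs : KrF Λ → List (LExp Λ)
  | .atom _ E => [E]
  | .and a b | .or a b => atomExprs a ++ atomExprs b
  | .all _ _ _ β | .ex _ _ _ β => atomExprs β

noncomputable def exprList (α : KrF Λ) : List (LExp Λ) := (atomExprs α).flatMap LExp.subexps

theorem subClosed_exprList (α : KrF Λ) : SubClosed (exprList α) := by
  simp only [SubClosed, exprList, List.mem_flatMap, LExp.mem_subexps]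
  rintro E ⟨E₀, hE₀, hE⟩ e he
  exact ⟨E₀, hE₀, he.trans hE⟩

theorem mem_exprList {α : KrF Λ} {E : LExp Λ} (h : E ∈ atomExprs α) : E ∈ exprList α :=
  List.mem_flatMap.2 ⟨E, h, LExp.mem_subexps.2 (.refl E)⟩

theorem innerOK_of_gKok {U : Set ℕ} {β : KrF Λ} (hL : ∀ E ∈ atomExprs β, E ∈ L)
    (hs : β.AtomsAll Safe) (hg : β.GKok U true) (hbv : Disjoint U β.bv) : InnerOK L U β := by
  induction β with
  | atom s E => exact ⟨hL E (List.mem_singleton_self E), hs, hg⟩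
  | and a b iha ihb | or a b iha ihb =>
    simp only [atomExprs, List.mem_append] at hL
    exact ⟨iha (fun E h => hL E (.inl h)) hs.1 hg.1 (hbv.mono_right Set.subset_union_left),
      ihb (fun E h => hL E (.inr h)) hs.2 hg.2 (hbv.mono_right Set.subset_union_right)⟩
  | all y l x β ih | ex y l x β ih =>
    exact ⟨fun hy => hbv.notMem_of_mem_left hy (Set.mem_insert y _),
      ih hL hs hg (hbv.mono_right (Set.subset_insert _ _))⟩

theorem outerOK_of_gKok {U : Set ℕ} {β : KrF Λ} (hL : ∀ E ∈ atomExprs β, E ∈ L)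
    (hs : β.AtomsAll Safe) (hg : β.GKok U false) (hcb : β.CleanBound) (hbv : Disjoint U β.bv)
    (hfv : β.fv ⊆ U) : OuterOK L U β := by
  induction β generalizing U with
  | atom s E => exact ⟨hfv (Set.mem_insert s _), hL E (List.mem_singleton_self E), hs, hg⟩
  | and a b iha ihb =>
    simp only [atomExprs, List.mem_append] at hL
    exact ⟨iha (fun E h => hL E (.inl h)) hs.1 hg.1 hcb.1 (hbv.mono_right Set.subset_union_left)
        (Set.subset_union_left.trans hfv),
      ihb (fun E h => hL E (.inr h)) hs.2 hg.2 hcb.2.1 (hbv.mono_right Set.subset_union_right)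
        (Set.subset_union_right.trans hfv)⟩
  | or a b iha ihb =>
    simp only [atomExprs, List.mem_append] at hL
    exact ⟨iha (fun E h => hL E (.inl h)) hs.1 hg.1 hcb.1 (hbv.mono_right Set.subset_union_left)
        (Set.subset_union_left.trans hfv),
      ihb (fun E h => hL E (.inr h)) hs.2 hg.2 hcb.2.1 (hbv.mono_right Set.subset_union_right)
        (Set.subset_union_right.trans hfv),
      Set.disjoint_iff_inter_eq_empty.2 hcb.2.2⟩
  | all y l x β ih =>
    refine ⟨hfv (Set.mem_insert x _), fun hy => hbv.notMem_of_mem_left hy (Set.mem_insert y _),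
      ih hL hs hg hcb.1 ?_ fun v hv => ?_⟩
    · exact Set.disjoint_insert_left.2 ⟨hcb.2, hbv.mono_right (Set.subset_insert _ _)⟩
    · by_cases hvy : v = y
      · exact .inl hvy
      · exact .inr (hfv (Set.mem_insert_of_mem x ⟨hv, hvy⟩))
  | ex y l x β =>
    exact ⟨hfv, fun hy => hbv.notMem_of_mem_left hy (Set.mem_insert y _),
      innerOK_of_gKok hL hs hg (hbv.mono_right (Set.subset_insert _ _))⟩

theorem _root_.IsGenKracht.outerOK {α : KrF Λ} {x₀ : ℕ} (h : IsGenKracht α x₀) :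
    OuterOK (exprList α) {x₀} α := by
  obtain ⟨⟨⟨hclean, hcb⟩, hs, hg⟩, hfv⟩ := h
  rw [hfv] at hclean hg
  exact outerOK_of_gKok (fun _ => mem_exprList) hs hg hcb
    (Set.disjoint_iff_inter_eq_empty.2 hclean) hfv.le

/-- The empty conjunction is the valid implication `¬⊤ → ⊥`. -/
noncomputable def sahlqvistFormula (L : List (LExp Λ)) (x₀ : ℕ) (α : KrF Λ) : MF Λ (ℕ × ℕ) :=
  ((outerTrans L α).map fun C => .imp (clauseAntecedent L x₀ C) .bot).foldr .and
    (.imp (.neg .top) .bot)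

theorem gsf_sahlqvistFormula {x₀ : ℕ} {α : KrF Λ} (h : OuterOK L {x₀} α) :
    GSF (sahlqvistFormula L x₀ α) := by
  refine .foldr_and (.impl (.neg .top)) ?_
  simp only [List.mem_map]
  rintro _ ⟨C, hC, rfl⟩
  exact .impl (gsAnt_clauseAntecedent fun p hp =>
    ((ok_of_mem_outerTrans h C hC).1.2 p hp).2.positive)

theorem forall_sat_sahlqvistFormula_iff (hcl : SubClosed L) {x₀ : ℕ}
    {α : KrF Λ} (h : OuterOK L {x₀} α) (g : ℕ → F.W) :
    (∀ θ, sat F θ (g x₀) (sahlqvistFormula L x₀ α)) ↔ α.holds F g := by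
  simp only [holds_iff_forall_mem_outerTrans h, sahlqvistFormula, sat_foldr_and,
    List.forall_mem_map, sat, not_true_eq_false, imp_self, and_true]
  refine ⟨fun hθ C hC => ?_, fun hC θ C' hC' => ?_⟩
  · exact (forall_sat_clauseAntecedent_imp_bot_iff hcl (ok_of_mem_outerTrans h C hC).1 g).1
      fun θ => hθ θ C hC
  · exact (forall_sat_clauseAntecedent_imp_bot_iff hcl (ok_of_mem_outerTrans h C' hC').1 g).2
      (hC C' hC') θ

end Kracht

/-- every generalized Kracht formula `α(x₀)` (read via the `#`-translation of
its atoms) is the local first-order correspondent of some generalized Sahlqvist formula. -/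
theorem statement13 {Λ : Type u} (α : KrF Λ) (x₀ : ℕ) (hα : IsGenKracht α x₀) :
    ∃ φ : MF Λ (ℕ × ℕ), GSF φ ∧
      ∀ (F : Frame Λ) (w : F.W),
        (∀ θ : ℕ × ℕ → Set F.W, sat F θ w φ) ↔
          ∀ g : ℕ → F.W, g x₀ = w → KrF.holds F g α := by
  have hcl := Kracht.subClosed_exprList α
  have hok := hα.outerOK
  refine ⟨_, Kracht.gsf_sahlqvistFormula hok, fun F w => ⟨fun h g hg => ?_, fun h => ?_⟩⟩
  · exact (Kracht.forall_sat_sahlqvistFormula_iff hcl hok g).1 (hg ▸ h)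
  · exact (Kracht.forall_sat_sahlqvistFormula_iff hcl hok fun _ => w).2 (h _ rfl)
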